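/- arXiv:1812.02777 — 11 statements merged into one kernel-verified Lean document; each statement's English description precedes it below -/
import Mathlib

section
/- For every z in the unitary group U(n) and all indices 1 ≤ j, k, α, β ≤ n one has Σ_{Z∈B} (z·Z·Z)_{jα} = −n·z_{jα} and Σ_{Z∈B} (z·Z)_{jα}·(z·Z)_{kβ} = −z_{kα}·z_{jβ}. Equivalently, the matrix-coefficient functions z_{jα} of the standard representation of U(n) satisfy τ(z_{jα}) = −n·z_{jα} and κ(z_{jα}, z_{kβ}) = −z_{kα}·z_{jβ}. -/
/-- The matrix `E_rs` with `(r,s)`-entry `1` and all other entries `0`. -/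
noncomputable def EE (n : ℕ) (r s : Fin n) : Matrix (Fin n) (Fin n) ℂ :=
  Matrix.single r s 1

/-- `X_rs = (E_rs + E_sr)/√2`. -/
noncomputable def XX (n : ℕ) (r s : Fin n) : Matrix (Fin n) (Fin n) ℂ :=
  (Real.sqrt 2 : ℂ)⁻¹ • (EE n r s + EE n s r)

/-- `Y_rs = (E_rs - E_sr)/√2`. -/
noncomputable def YY (n : ℕ) (r s : Fin n) : Matrix (Fin n) (Fin n) ℂ :=
  (Real.sqrt 2 : ℂ)⁻¹ • (EE n r s - EE n s r)

/-- `D_r = E_rr`. -/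
noncomputable def DD (n : ℕ) (r : Fin n) : Matrix (Fin n) (Fin n) ℂ :=
  Matrix.single r r 1

/-- The Laplace–Beltrami operator `τ(F)(z) = Σ_{Z ∈ B} F(z·Z·Z)` of the bi-invariant
metric on `U(n)`, where `B = {iX_rs, Y_rs (r<s), iD_r}` is the canonical orthonormal
basis of `u(n)`. -/
noncomputable def tauU (n : ℕ) (F : Matrix (Fin n) (Fin n) ℂ → ℂ)
    (z : Matrix (Fin n) (Fin n) ℂ) : ℂ :=
  (∑ r : Fin n, ∑ s : Fin n, if r < s then
      F (z * (Complex.I • XX n r s) * (Complex.I • XX n r s))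
        + F (z * YY n r s * YY n r s)
    else 0)
  + ∑ r : Fin n, F (z * (Complex.I • DD n r) * (Complex.I • DD n r))

/-- The conformality operator `κ(F,G)(z) = Σ_{Z ∈ B} F(z·Z)·G(z·Z)` on `U(n)`. -/
noncomputable def kappaU (n : ℕ) (F G : Matrix (Fin n) (Fin n) ℂ → ℂ)
    (z : Matrix (Fin n) (Fin n) ℂ) : ℂ :=
  (∑ r : Fin n, ∑ s : Fin n, if r < s then
      F (z * (Complex.I • XX n r s)) * G (z * (Complex.I • XX n r s))
        + F (z * YY n r s) * G (z * YY n r s)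
    else 0)
  + ∑ r : Fin n, F (z * (Complex.I • DD n r)) * G (z * (Complex.I • DD n r))

/-! Both identities reduce to the completeness relation `Σ_{Z ∈ B} Z_ab Z_cd = -δ_ad δ_bc` of the
orthonormal basis `B` of `u(n)`: `(z Z Z)_{jα}` and `(z Z)_{jα} (z Z)_{kβ}` are linear combinations of
the products `Z_ab Z_cd`. The relation itself holds because each pair `iX_rs, Y_rs` contributes
`-(E_rs ⊗ E_sr + E_sr ⊗ E_rs)` and each `iD_r` contributes `-(E_rr ⊗ E_rr)`, so that the whole sum is
`-Σ_{r,s} E_rs ⊗ E_sr`. -/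

namespace UnitaryBasis

variable {n : ℕ}

/-- `Σ_{Z ∈ B} f Z` for the canonical orthonormal basis `B` of `u(n)`. -/
noncomputable def basisSum (n : ℕ) (f : Matrix (Fin n) (Fin n) ℂ → ℂ) : ℂ :=
  (∑ r : Fin n, ∑ s : Fin n, if r < s then f (Complex.I • XX n r s) + f (YY n r s) else 0)
  + ∑ r : Fin n, f (Complex.I • DD n r)

theorem tauU_eq_basisSum (F : Matrix (Fin n) (Fin n) ℂ → ℂ) (z : Matrix (Fin n) (Fin n) ℂ) :
    tauU n F z = basisSum n (fun Z => F (z * Z * Z)) :=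
  rfl

theorem kappaU_eq_basisSum (F G : Matrix (Fin n) (Fin n) ℂ → ℂ) (z : Matrix (Fin n) (Fin n) ℂ) :
    kappaU n F G z = basisSum n (fun Z => F (z * Z) * G (z * Z)) :=
  rfl

theorem basisSum_sum {ι : Type*} (t : Finset ι) (g : ι → Matrix (Fin n) (Fin n) ℂ → ℂ) :
    basisSum n (fun Z => ∑ i ∈ t, g i Z) = ∑ i ∈ t, basisSum n (g i) := by
  simp only [basisSum, Finset.sum_add_distrib]
  congr 1
  · simp only [← Finset.sum_add_distrib, Finset.ite_sum_zero]
    rw [Finset.sum_comm (s := t)]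
    exact Fintype.sum_congr _ _ fun r => Finset.sum_comm
  · exact Finset.sum_comm

theorem basisSum_const_mul (c : ℂ) (g : Matrix (Fin n) (Fin n) ℂ → ℂ) :
    basisSum n (fun Z => c * g Z) = c * basisSum n g := by
  simp only [basisSum, mul_add, Finset.mul_sum, mul_ite, mul_zero]

theorem sum_lt_add_sum_diag {ι M : Type*} [Fintype ι] [LinearOrder ι] [AddCommMonoid M]
    (g : ι → ι → M) :
    (∑ r, ∑ s, if r < s then g r s + g s r else 0) + ∑ r, g r r = ∑ r, ∑ s, g r s := by
  have trichotomy : ∀ r s, g r s = (if r < s then g r s else 0) + (if s < r then g r s else 0)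
      + (if r = s then g r s else 0) := by
    intro r s
    rcases lt_trichotomy r s with h | rfl | h
    · simp [h, h.not_gt, h.ne]
    · simp
    · simp [h, h.not_gt, h.ne']
  rw [Fintype.sum_congr _ _ fun r => Fintype.sum_congr _ _ fun s => trichotomy r s]
  simp only [ite_add_zero, Finset.sum_add_distrib, Finset.sum_ite_eq, Finset.mem_univ, if_true]
  rw [Finset.sum_comm (f := fun r s => if s < r then g r s else 0)]

theorem smul_XX_apply_mul_add_YY_apply_mul (r s a b c d : Fin n) :
    (Complex.I • XX n r s) a b * (Complex.I • XX n r s) c d + YY n r s a b * YY n r s c d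
      = -(EE n r s a b * EE n s r c d + EE n s r a b * EE n r s c d) := by
  have hI : Complex.I * Complex.I = -1 := Complex.I_mul_I
  have h2 : (Real.sqrt 2 : ℂ)⁻¹ * (Real.sqrt 2 : ℂ)⁻¹ = 2⁻¹ := by
    rw [← mul_inv, ← Complex.ofReal_mul, Real.mul_self_sqrt zero_le_two]
    norm_num
  simp only [XX, YY, Matrix.smul_apply, Matrix.add_apply, Matrix.sub_apply, smul_eq_mul]
  linear_combination
    ((Real.sqrt 2 : ℂ)⁻¹ * (Real.sqrt 2 : ℂ)⁻¹ * (EE n r s a b + EE n s r a b)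
        * (EE n r s c d + EE n s r c d)) * hI
      + ((EE n r s a b - EE n s r a b) * (EE n r s c d - EE n s r c d)
        - (EE n r s a b + EE n s r a b) * (EE n r s c d + EE n s r c d)) * h2

theorem smul_DD_apply_mul (r a b c d : Fin n) :
    (Complex.I • DD n r) a b * (Complex.I • DD n r) c d = -(EE n r r a b * EE n r r c d) := by
  simp only [DD, EE, Matrix.smul_apply, smul_eq_mul]
  linear_combination (Matrix.single r r (1 : ℂ) a b * Matrix.single r r 1 c d) * Complex.I_mul_I

theorem sum_EE_apply_mul_EE_apply (a b c d : Fin n) :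
    (∑ r, ∑ s, EE n r s a b * EE n s r c d) = if a = d ∧ b = c then 1 else 0 := by
  simp only [EE, Matrix.single_apply, ite_and, mul_ite, ite_mul, one_mul, mul_zero, zero_mul]
  simp only [Finset.sum_ite_eq', Finset.mem_univ, if_true, @eq_comm _ d, @eq_comm _ c]

theorem basisSum_apply_mul_apply (a b c d : Fin n) :
    basisSum n (fun Z => Z a b * Z c d) = -if a = d ∧ b = c then 1 else 0 := by
  have ite_neg_zero (p : Prop) [Decidable p] (x : ℂ) :
      (if p then -x else 0) = -if p then x else 0 := by
    split_ifs <;> simp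
  rw [← sum_EE_apply_mul_EE_apply, ← sum_lt_add_sum_diag, neg_add]
  simp only [basisSum, smul_XX_apply_mul_add_YY_apply_mul, smul_DD_apply_mul, ite_neg_zero,
    Finset.sum_neg_distrib]

theorem basisSum_mul_mul_apply (z : Matrix (Fin n) (Fin n) ℂ) (j α : Fin n) :
    basisSum n (fun Z => (z * Z * Z) j α) = -(n : ℂ) * z j α := by
  simp only [Matrix.mul_apply, Finset.sum_mul, mul_assoc, basisSum_sum, basisSum_const_mul,
    basisSum_apply_mul_apply]
  simp

theorem basisSum_mul_apply_mul_mul_apply (z : Matrix (Fin n) (Fin n) ℂ) (j α k β : Fin n) :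
    basisSum n (fun Z => (z * Z) j α * (z * Z) k β) = -(z k α * z j β) := by
  simp only [Matrix.mul_apply, Finset.sum_mul_sum, mul_mul_mul_comm, basisSum_sum,
    basisSum_const_mul, basisSum_apply_mul_apply]
  simp [ite_and, mul_comm]

end UnitaryBasis

theorem stmt_0_general (n : ℕ) (z : Matrix (Fin n) (Fin n) ℂ) (j k α β : Fin n) :
    tauU n (fun w => w j α) z = -(n : ℂ) * z j α ∧
    kappaU n (fun w => w j α) (fun w => w k β) z = -(z k α * z j β) := by
  rw [UnitaryBasis.tauU_eq_basisSum, UnitaryBasis.kappaU_eq_basisSum]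
  exact ⟨UnitaryBasis.basisSum_mul_mul_apply z j α,
    UnitaryBasis.basisSum_mul_apply_mul_mul_apply z j α k β⟩

/-- The matrix coefficients `z_{jα}` of the standard representation of `U(n)`
satisfy `τ(z_{jα}) = -n·z_{jα}` and `κ(z_{jα}, z_{kβ}) = -z_{kα}·z_{jβ}`. -/
theorem stmt_0 (n : ℕ) (hn : 0 < n) (z : Matrix (Fin n) (Fin n) ℂ)
    (hz : z ∈ Matrix.unitaryGroup (Fin n) ℂ) (j k α β : Fin n) :
    tauU n (fun w => w j α) z = -(n : ℂ) * z j α ∧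
    kappaU n (fun w => w j α) (fun w => w k β) z = -(z k α * z j β) :=
  stmt_0_general n z j k α β
end

section
/- Let M_Q = (q_{jα}) ∈ ℂ^{n×n} be a nonzero matrix and define Q : U(n) → ℂ by Q(z) = Σ_{j,α} q_{jα}·z_{jα}. Then Q(z)² + Σ_{Z∈B} Q(z·Z)² = 0 for every z ∈ U(n) (i.e. Q² + κ(Q,Q) = 0 on U(n)) if and only if any two columns of the matrix M_Q are linearly dependent. -/
/-!
Writing `M = zᵀ q`, one has `Q(z) = tr M` and `κ(Q,Q)(z) = -tr (M²)`, so `Q² + κ(Q,Q)` is the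
quadratic form of the symmetric bilinear form `S(x,y) = tr(xᵀq) tr(yᵀq) - tr(xᵀq yᵀq)`, whose
values on pairs of matrix units are the `2 × 2` minors of `q`.

A symmetric `ℂ`-bilinear form `S` vanishing on the diagonal of `U(n)` vanishes identically. For a
Hermitian unitary `h` the matrix `((1 + i)/2)(1 - i h)` is unitary, and polarizing along it gives
`S(z, z h) = 0`. Hermitian unitaries span all matrices: the Householder reflections
`1 - 2 v v* / |v|²` put every `v v*` in their span, and polarization then every `v w*`.
-/

open Matrix

lemma Finset.sum_sum_eq_sum_sum_lt_add_sum_diag {ι M : Type*} [Fintype ι] [LinearOrder ι]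
    [AddCommMonoid M] (f : ι → ι → M) :
    ∑ r, ∑ s, f r s = (∑ r, ∑ s, if r < s then f r s + f s r else 0) + ∑ r, f r r := by
  have hsplit : ∀ r s, f r s =
      ((if r < s then f r s else 0) + if s < r then f r s else 0) + if r = s then f r s else 0 := by
    intro r s
    rcases lt_trichotomy r s with h | rfl | h
    · simp [h, h.not_gt, h.ne]
    · simp
    · simp [h, h.not_gt, h.ne']
  have hswap : (∑ r, ∑ s, if s < r then f r s else 0) = ∑ r, ∑ s, if r < s then f s r else 0 :=
    Finset.sum_comm
  calc ∑ r, ∑ s, f r s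
      = ∑ r, ∑ s, (((if r < s then f r s else 0) + if s < r then f r s else 0)
          + if r = s then f r s else 0) := by simp only [← hsplit]
    _ = _ := by
      simp only [Finset.sum_add_distrib, hswap, ite_add_zero, Finset.sum_ite_eq, Finset.mem_univ,
        if_true]

namespace Matrix

lemma vecMulVec_star_eq {m : Type*} (a b : m → ℂ) :
    vecMulVec a (star b) =
      (1 / 2 : ℂ) • (vecMulVec (a + b) (star (a + b)) - vecMulVec a (star a) - vecMulVec b (star b))
      + (Complex.I / 2) • (vecMulVec (a + Complex.I • b) (star (a + Complex.I • b))
          - vecMulVec a (star a) - vecMulVec b (star b)) := by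
  ext i j
  simp only [add_apply, smul_apply, sub_apply, vecMulVec_apply, Pi.add_apply, Pi.star_apply,
    Pi.smul_apply, smul_eq_mul, star_add, star_mul', Complex.star_def, Complex.conj_I]
  linear_combination (a i * (starRingEnd ℂ) (b j) - b i * (starRingEnd ℂ) (a j)
    + b i * (starRingEnd ℂ) (b j) * Complex.I) / 2 * Complex.I_sq

variable {m : Type*} [Fintype m] [DecidableEq m]

def selfAdjointUnitaries (m : Type*) [Fintype m] [DecidableEq m] : Set (Matrix m m ℂ) :=
  {h | h ∈ unitaryGroup m ℂ ∧ IsSelfAdjoint h}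

noncomputable def householder (v : m → ℂ) : Matrix m m ℂ :=
  1 - (2 / (star v ⬝ᵥ v)) • vecMulVec v (star v)

lemma isSelfAdjoint_householder (v : m → ℂ) : IsSelfAdjoint (householder v) := by
  have hstar : star (star v ⬝ᵥ v) = star v ⬝ᵥ v := by rw [← star_dotProduct]
  rw [householder, IsSelfAdjoint, star_sub, star_one, star_smul, star_div₀, hstar, star_ofNat,
    star_eq_conjTranspose, conjTranspose_vecMulVec, star_star]

lemma householder_mem_unitaryGroup {v : m → ℂ} (hv : star v ⬝ᵥ v ≠ 0) :
    householder v ∈ unitaryGroup m ℂ := by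
  have hsq : vecMulVec v (star v) * vecMulVec v (star v) =
      (star v ⬝ᵥ v) • vecMulVec v (star v) := by
    rw [vecMulVec_mul_vecMulVec, vecMulVec_smul]
  rw [mem_unitaryGroup_iff, (isSelfAdjoint_householder v).star_eq, householder]
  simp only [sub_mul, mul_sub, one_mul, mul_one, smul_mul_assoc, mul_smul_comm, hsq, smul_smul]
  rw [div_mul_cancel₀ 2 hv]
  module

lemma vecMulVec_star_self_mem_span (v : m → ℂ) :
    vecMulVec v (star v) ∈ Submodule.span ℂ (selfAdjointUnitaries m) := by
  rcases eq_or_ne v 0 with rfl | hv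
  · simp
  have hs : star v ⬝ᵥ v ≠ 0 := by
    open scoped ComplexOrder in exact dotProduct_star_self_eq_zero.not.mpr hv
  have h1 : (1 : Matrix m m ℂ) ∈ selfAdjointUnitaries m := ⟨one_mem _, .one _⟩
  have hH : householder v ∈ selfAdjointUnitaries m :=
    ⟨householder_mem_unitaryGroup hs, isSelfAdjoint_householder v⟩
  convert Submodule.smul_mem _ ((star v ⬝ᵥ v) / 2)
    (Submodule.sub_mem _ (Submodule.subset_span h1) (Submodule.subset_span hH)) using 1
  rw [householder, sub_sub_cancel, smul_smul, div_mul_div_cancel₀ two_ne_zero, div_self hs, one_smul]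

lemma span_selfAdjointUnitaries : Submodule.span ℂ (selfAdjointUnitaries m) = ⊤ := by
  rw [eq_top_iff, ← (stdBasis ℂ m m).span_eq, Submodule.span_le]
  rintro _ ⟨⟨i, j⟩, rfl⟩
  have hij : stdBasis ℂ m m (i, j) = vecMulVec (Pi.single i 1) (star (Pi.single j 1)) := by
    rw [stdBasis_eq_single, single_eq_single_vecMulVec_single, Pi.star_single, star_one]
  have hmem := vecMulVec_star_self_mem_span (m := m)
  rw [SetLike.mem_coe, hij, vecMulVec_star_eq]
  exact Submodule.add_mem _
    (Submodule.smul_mem _ _ (Submodule.sub_mem _ (Submodule.sub_mem _ (hmem _) (hmem _)) (hmem _)))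
    (Submodule.smul_mem _ _ (Submodule.sub_mem _ (Submodule.sub_mem _ (hmem _) (hmem _)) (hmem _)))

lemma one_add_I_div_two_smul_mem_unitaryGroup {h : Matrix m m ℂ}
    (hh : h ∈ selfAdjointUnitaries m) :
    ((1 + Complex.I) / 2) • (1 - Complex.I • h) ∈ unitaryGroup m ℂ := by
  obtain ⟨hu, hsa⟩ := hh
  have hsq : h * h = 1 := by simpa [hsa.star_eq] using mem_unitaryGroup_iff.mp hu
  rw [mem_unitaryGroup_iff, star_smul, star_sub, star_one, star_smul, hsa.star_eq]
  simp only [Complex.star_def, map_div₀, map_add, map_one, Complex.conj_I, map_ofNat]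
  simp only [sub_mul, mul_sub, one_mul, mul_one, smul_mul_assoc, mul_smul_comm, smul_smul, hsq]
  match_scalars
  · linear_combination (Complex.I ^ 2 - 3) / 4 * Complex.I_sq
  · ring

end Matrix

namespace LinearMap.BilinForm

variable {m : Type*} [Fintype m] [DecidableEq m] {B : LinearMap.BilinForm ℂ (Matrix m m ℂ)}

lemma apply_mul_eq_zero_of_forall_unitary (hB : B.IsSymm)
    (h : ∀ z ∈ unitaryGroup m ℂ, B z z = 0) {z : Matrix m m ℂ} (hz : z ∈ unitaryGroup m ℂ)
    {k : Matrix m m ℂ} (hk : k ∈ selfAdjointUnitaries m) :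
    B z (z * k) = 0 := by
  have hu := h _ (mul_mem hz (one_add_I_div_two_smul_mem_unitaryGroup hk))
  simp only [mul_smul_comm, mul_sub, mul_one, map_smul, map_sub, LinearMap.smul_apply,
    LinearMap.sub_apply, smul_eq_mul, hB.eq (z * _) z, h z hz, h _ (mul_mem hz hk.1)] at hu
  linear_combination hu + B z (z * k) * (1 + Complex.I / 2) * Complex.I_sq

lemma forall_unitary_apply_self_eq_zero_iff (hB : B.IsSymm) :
    (∀ z ∈ unitaryGroup m ℂ, B z z = 0) ↔ B = 0 := by
  refine ⟨fun h => ?_, fun h z _ => by simp [h]⟩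
  have hleft : ∀ z ∈ unitaryGroup m ℂ, ∀ y, B z y = 0 := by
    intro z hz y
    have hcomp : (B z).comp (LinearMap.mulLeft ℂ z) = 0 :=
      LinearMap.ext_on span_selfAdjointUnitaries fun k hk =>
        apply_mul_eq_zero_of_forall_unitary hB h hz hk
    have hy : y = z * (star z * y) := by rw [← mul_assoc, mem_unitaryGroup_iff.mp hz, one_mul]
    rw [hy]
    exact LinearMap.congr_fun hcomp (star z * y)
  refine LinearMap.ext fun x => LinearMap.ext_on span_selfAdjointUnitaries fun k hk => ?_
  simpa [hB.eq x k] using hleft k hk.1 x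

end LinearMap.BilinForm

section MinorForm

variable {m : Type*} [Fintype m] (q : Matrix m m ℂ)

/-- The functional `Q(w) = ∑ q_{jα} w_{jα}`. -/
def pairing : Matrix m m ℂ →ₗ[ℂ] ℂ where
  toFun w := ∑ j, ∑ α, q j α * w j α
  map_add' x y := by simp only [Matrix.add_apply, mul_add, Finset.sum_add_distrib]
  map_smul' c x := by
    simp only [Matrix.smul_apply, smul_eq_mul, Finset.mul_sum, RingHom.id_apply, mul_left_comm]

lemma pairing_eq_trace (z : Matrix m m ℂ) : pairing q z = trace (zᵀ * q) := by
  simp only [pairing, LinearMap.coe_mk, AddHom.coe_mk, trace, diag, mul_apply, transpose_apply]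
  rw [Finset.sum_comm]
  simp only [mul_comm]

lemma pairing_mul_single [DecidableEq m] (z : Matrix m m ℂ) (r s : m) :
    pairing q (z * single r s 1) = (zᵀ * q) r s := by
  rw [pairing_eq_trace, transpose_mul, transpose_single, mul_assoc, trace_single_mul, one_smul]

def minorForm : LinearMap.BilinForm ℂ (Matrix m m ℂ) :=
  LinearMap.mk₂ ℂ (fun x y => pairing q x * pairing q y - trace (xᵀ * q * (yᵀ * q)))
    (fun x x' y => by simp only [map_add, transpose_add, add_mul, trace_add]; ring)
    (fun c x y => by
      simp only [map_smul, transpose_smul, smul_mul_assoc, trace_smul, smul_eq_mul]; ring)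
    (fun x y y' => by simp only [map_add, transpose_add, add_mul, mul_add, trace_add]; ring)
    (fun c x y => by
      simp only [map_smul, transpose_smul, smul_mul_assoc, mul_smul_comm, trace_smul, smul_eq_mul]
      ring)

lemma minorForm_apply (x y : Matrix m m ℂ) :
    minorForm q x y = pairing q x * pairing q y - trace (xᵀ * q * (yᵀ * q)) :=
  rfl

lemma minorForm_isSymm : (minorForm q).IsSymm := by
  refine ⟨fun x y => ?_⟩
  rw [minorForm_apply, minorForm_apply, mul_comm (pairing q x), trace_mul_comm]

lemma minorForm_single [DecidableEq m] (j a k b : m) :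
    minorForm q (single j a 1) (single k b 1) = q j a * q k b - q j b * q k a := by
  rw [minorForm_apply, pairing_eq_trace, pairing_eq_trace, transpose_single, transpose_single,
    ← mul_assoc, single_mul_mul_single, trace_single_mul, trace_single_mul, trace_single_mul]
  simp only [one_mul, mul_one, smul_eq_mul]

lemma minorForm_eq_zero_iff [DecidableEq m] :
    minorForm q = 0 ↔ ∀ j k a b, q j a * q k b = q j b * q k a := by
  refine ⟨fun h j k a b => ?_, fun h => ?_⟩
  · rw [← sub_eq_zero, ← minorForm_single, h, LinearMap.zero_apply, LinearMap.zero_apply]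
  · refine LinearMap.BilinForm.ext_basis (stdBasis ℂ m m) fun ⟨j, a⟩ ⟨k, b⟩ => ?_
    rw [stdBasis_eq_single, stdBasis_eq_single, minorForm_single, h, sub_self,
      LinearMap.zero_apply, LinearMap.zero_apply]

end MinorForm

lemma kappaU_self (n : ℕ) (φ : Matrix (Fin n) (Fin n) ℂ →ₗ[ℂ] ℂ) (z : Matrix (Fin n) (Fin n) ℂ) :
    kappaU n φ φ z = -∑ r, ∑ s, φ (z * single r s 1) * φ (z * single s r 1) := by
  have h2 : ((Real.sqrt 2 : ℂ)⁻¹) ^ 2 = 2⁻¹ := by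
    rw [inv_pow, ← Complex.ofReal_pow, Real.sq_sqrt zero_le_two]; norm_num
  rw [Finset.sum_sum_eq_sum_sum_lt_add_sum_diag, neg_add, ← Finset.sum_neg_distrib]
  simp_rw [← Finset.sum_neg_distrib]
  unfold kappaU
  congr 1
  · refine Finset.sum_congr rfl fun r _ => Finset.sum_congr rfl fun s _ => ?_
    split_ifs
    · simp only [XX, YY, EE, mul_smul_comm, mul_add, mul_sub, map_smul, map_add, map_sub, smul_eq_mul]
      linear_combination
        ((Real.sqrt 2 : ℂ)⁻¹ ^ 2 * (φ (z * single r s 1) + φ (z * single s r 1)) ^ 2) * Complex.I_sq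
          - 4 * φ (z * single r s 1) * φ (z * single s r 1) * h2
    · simp
  · refine Finset.sum_congr rfl fun r _ => ?_
    simp only [DD, mul_smul_comm, map_smul, smul_eq_mul]
    linear_combination φ (z * single r r 1) ^ 2 * Complex.I_sq

lemma sq_pairing_add_kappaU {n : ℕ} (q z : Matrix (Fin n) (Fin n) ℂ) :
    pairing q z ^ 2 + kappaU n (pairing q) (pairing q) z = minorForm q z z := by
  rw [kappaU_self, minorForm_apply]
  simp only [pairing_mul_single]
  simp only [pairing_eq_trace, trace, diag, mul_apply]
  ring

lemma Matrix.forall_cols_dependent_iff {K m ι : Type*} [Field K] (q : Matrix ι m K) :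
    (∀ α β, ∃ c d : K, (c ≠ 0 ∨ d ≠ 0) ∧ ∀ j, c * q j α + d * q j β = 0) ↔
      ∀ j k α β, q j α * q k β = q j β * q k α := by
  refine ⟨fun h j k α β => ?_, fun h α β => ?_⟩
  · obtain ⟨c, d, hcd, hdep⟩ := h α β
    have hc : c * (q j α * q k β - q j β * q k α) = 0 := by
      linear_combination q k β * hdep j - q j β * hdep k
    have hd : d * (q j α * q k β - q j β * q k α) = 0 := by
      linear_combination q j α * hdep k - q k α * hdep j
    rw [← sub_eq_zero]
    rcases hcd with hc0 | hd0
    · exact (mul_eq_zero.mp hc).resolve_left hc0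
    · exact (mul_eq_zero.mp hd).resolve_left hd0
  · by_cases hα : ∀ j, q j α = 0
    · exact ⟨1, 0, Or.inl one_ne_zero, fun j => by simp [hα j]⟩
    · obtain ⟨j₀, hj₀⟩ := not_forall.mp hα
      exact ⟨q j₀ β, -q j₀ α, Or.inr (neg_ne_zero.mpr hj₀), fun j => by
        linear_combination -h j₀ j α β⟩

theorem stmt_1_general (n : ℕ) (q : Matrix (Fin n) (Fin n) ℂ) :
    (∀ z ∈ Matrix.unitaryGroup (Fin n) ℂ,
        (∑ j : Fin n, ∑ α : Fin n, q j α * z j α) ^ 2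
          + kappaU n (fun w => ∑ j : Fin n, ∑ α : Fin n, q j α * w j α)
              (fun w => ∑ j : Fin n, ∑ α : Fin n, q j α * w j α) z = 0) ↔
    (∀ α β : Fin n, ∃ c d : ℂ, (c ≠ 0 ∨ d ≠ 0) ∧
        ∀ j : Fin n, c * q j α + d * q j β = 0) := by
  rw [Matrix.forall_cols_dependent_iff, ← minorForm_eq_zero_iff,
    ← LinearMap.BilinForm.forall_unitary_apply_self_eq_zero_iff (minorForm_isSymm q)]
  exact forall₂_congr fun z _ => by rw [← sq_pairing_add_kappaU]; rfl

/-- For a nonzero matrix `M_Q = (q_{jα})` and `Q(z) = Σ q_{jα} z_{jα}` on `U(n)`,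
the identity `Q² + κ(Q,Q) = 0` holds on `U(n)` if and only if any two columns of
`M_Q` are linearly dependent. -/
theorem stmt_1 (n : ℕ) (hn : 0 < n) (q : Matrix (Fin n) (Fin n) ℂ) (hq : q ≠ 0) :
    (∀ z ∈ Matrix.unitaryGroup (Fin n) ℂ,
        (∑ j : Fin n, ∑ α : Fin n, q j α * z j α) ^ 2
          + kappaU n (fun w => ∑ j : Fin n, ∑ α : Fin n, q j α * w j α)
              (fun w => ∑ j : Fin n, ∑ α : Fin n, q j α * w j α) z = 0) ↔
    (∀ α β : Fin n, ∃ c d : ℂ, (c ≠ 0 ∨ d ≠ 0) ∧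
        ∀ j : Fin n, c * q j α + d * q j β = 0) :=
  stmt_1_general n q
end

section
/- Let a, q ∈ ℂⁿ be nonzero vectors, let M_P = (p_{jα}) ∈ ℂ^{n×n} be a nonzero matrix, and define P, Q : U(n) → ℂ by P(z) = Σ_{j,α} p_{jα}·z_{jα} and Q(z) = Σ_{k,β} q_k·a_β·z_{kβ}. Suppose that either (i) for every α the column vector (p_{1α},…,p_{nα}) is linearly dependent with q, or (ii) there exists β₀ such that a_β = 0 for all β ≠ β₀ and p_{jα} = 0 for all α ≠ β₀ and all j. Then P(z)·Q(z) + Σ_{Z∈B} P(z·Z)·Q(z·Z) = 0 for every z ∈ U(n), i.e. PQ + κ(P,Q) = 0 on U(n) (so the quotient f = P/Q is harmonic on the open dense set where Q ≠ 0). -/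
open Matrix

lemma Finset.sum_ite_lt_add_sum_diag {ι M : Type*} [Fintype ι] [LinearOrder ι] [AddCommMonoid M]
    (f : ι → ι → M) :
    (∑ r, ∑ s, if r < s then f r s + f s r else 0) + ∑ r, f r r = ∑ r, ∑ s, f r s := by
  have split : ∀ r s, f r s =
      ((if r < s then f r s else 0) + if s < r then f r s else 0) + if r = s then f r s else 0 := by
    intro r s
    rcases lt_trichotomy r s with h | rfl | h
    · simp [h, h.not_gt, h.ne]
    · simp
    · simp [h, h.not_gt, h.ne']
  have swap : ∑ r, ∑ s, (if s < r then f r s else 0) = ∑ r, ∑ s, if r < s then f s r else 0 :=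
    Finset.sum_comm
  have ite_add : ∀ r s, (if r < s then f r s + f s r else 0) =
      (if r < s then f r s else 0) + if r < s then f s r else 0 := by
    intro r s
    split_ifs <;> simp
  conv_rhs => rw [Finset.sum_congr rfl fun r _ => Finset.sum_congr rfl fun s _ => split r s]
  simp only [ite_add, Finset.sum_add_distrib, swap, Finset.sum_ite_eq, Finset.mem_univ, if_true]

namespace Matrix

variable {m n R : Type*} [CommSemiring R]

lemma trace_vecMulVec_mul_vecMulVec_same_left [Fintype n] (u v w : n → R) :
    trace (vecMulVec u v * vecMulVec u w) = trace (vecMulVec u v) * trace (vecMulVec u w) := by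
  rw [vecMulVec_mul_vecMulVec, trace_vecMulVec, trace_vecMulVec, trace_vecMulVec,
    dotProduct_smul, smul_eq_mul, dotProduct_comm v]

lemma trace_vecMulVec_mul_vecMulVec_same_right [Fintype n] (u w v : n → R) :
    trace (vecMulVec u v * vecMulVec w v) = trace (vecMulVec u v) * trace (vecMulVec w v) := by
  rw [vecMulVec_mul_vecMulVec, trace_vecMulVec, trace_vecMulVec, trace_vecMulVec,
    dotProduct_smul, smul_eq_mul, dotProduct_comm w, mul_comm]

lemma eq_vecMulVec_of_col_dependent {K : Type*} [Field K] {q : m → K} (hq : q ≠ 0)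
    {p : Matrix m n K}
    (hp : ∀ α, ∃ c d : K, (c ≠ 0 ∨ d ≠ 0) ∧ ∀ j, c * p j α + d * q j = 0) :
    ∃ c : n → K, p = vecMulVec q c := by
  have hcol : ∀ α, ∃ c, ∀ j, p j α = q j * c := by
    intro α
    obtain ⟨c, d, hcd, h⟩ := hp α
    have hc : c ≠ 0 := by
      rintro rfl
      refine hq (funext fun j => ?_)
      simpa [hcd.resolve_left (not_not_intro rfl)] using h j
    exact ⟨-d / c, fun j => by field_simp; linear_combination h j⟩
  choose c hc using hcol
  exact ⟨c, ext fun j α => hc α j⟩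

lemma eq_vecMulVec_single_of_col_eq_zero [DecidableEq n] {p : Matrix m n R} (β₀ : n)
    (hp : ∀ α, α ≠ β₀ → ∀ j, p j α = 0) :
    p = vecMulVec (fun j => p j β₀) (Pi.single β₀ 1) := by
  ext j α
  by_cases hα : α = β₀
  · subst hα; simp [vecMulVec_apply]
  · simp [vecMulVec_apply, hα, hp α hα j]

end Matrix

def linearForm {m n R : Type*} [Fintype m] [Fintype n] [NonUnitalNonAssocSemiring R]
    (C : Matrix m n R) (w : Matrix m n R) : R :=
  ∑ j, ∑ α, C j α * w j α

lemma linearForm_eq_trace {m n R : Type*} [Fintype m] [Fintype n] [NonUnitalNonAssocSemiring R]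
    (C w : Matrix m n R) : linearForm C w = trace (Cᵀ * w) := by
  simp only [linearForm, trace, diag, mul_apply, transpose_apply]
  exact Finset.sum_comm

section KappaU

variable {n : ℕ}

lemma trace_mul_I_smul_XX (A : Matrix (Fin n) (Fin n) ℂ) (r s : Fin n) :
    trace (A * (Complex.I • XX n r s)) = Complex.I * (Real.sqrt 2 : ℂ)⁻¹ * (A s r + A r s) := by
  simp only [XX, EE, Matrix.mul_smul, Matrix.mul_add, trace_smul, trace_add, trace_mul_single,
    MulOpposite.op_one, one_smul, smul_eq_mul]
  ring

lemma trace_mul_YY (A : Matrix (Fin n) (Fin n) ℂ) (r s : Fin n) :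
    trace (A * YY n r s) = (Real.sqrt 2 : ℂ)⁻¹ * (A s r - A r s) := by
  simp only [YY, EE, Matrix.mul_smul, trace_smul, trace_sub, trace_mul_single,
    MulOpposite.op_one, one_smul, smul_eq_mul, mul_sub]

lemma trace_mul_I_smul_DD (A : Matrix (Fin n) (Fin n) ℂ) (r : Fin n) :
    trace (A * (Complex.I • DD n r)) = Complex.I * A r r := by
  simp [DD, trace_mul_single, mul_comm]

lemma kappaU_trace_mul (A B z : Matrix (Fin n) (Fin n) ℂ) :
    kappaU n (fun w => trace (A * w)) (fun w => trace (B * w)) z = -trace (A * z * (B * z)) := by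
  have hsq : (Real.sqrt 2 : ℂ)⁻¹ ^ 2 = 2⁻¹ := by
    rw [inv_pow, ← Complex.ofReal_pow, Real.sq_sqrt zero_le_two, Complex.ofReal_ofNat]
  have off_diag : ∀ a b a' b' : ℂ,
      Complex.I * (Real.sqrt 2 : ℂ)⁻¹ * (a + b) * (Complex.I * (Real.sqrt 2 : ℂ)⁻¹ * (a' + b'))
        + (Real.sqrt 2 : ℂ)⁻¹ * (a - b) * ((Real.sqrt 2 : ℂ)⁻¹ * (a' - b'))
      = -(b * a') + -(a * b') := by
    intro a b a' b'
    linear_combination (Real.sqrt 2 : ℂ)⁻¹ ^ 2 * (a + b) * (a' + b') * Complex.I_sq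
      + ((a - b) * (a' - b') - (a + b) * (a' + b')) * hsq
  have diag : ∀ a a' : ℂ, Complex.I * a * (Complex.I * a') = -(a * a') := fun a a' => by
    linear_combination a * a' * Complex.I_sq
  simp only [kappaU, ← Matrix.mul_assoc, trace_mul_I_smul_XX, trace_mul_YY, trace_mul_I_smul_DD,
    off_diag, diag]
  rw [Finset.sum_ite_lt_add_sum_diag (fun r s => -((A * z) r s * (B * z) s r)),
    Matrix.mul_assoc (A * z) B z]
  simp only [Finset.sum_neg_distrib]
  rfl

lemma linearForm_mul_add_kappaU (C D z : Matrix (Fin n) (Fin n) ℂ) :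
    linearForm C z * linearForm D z + kappaU n (linearForm C) (linearForm D) z
      = trace (Cᵀ * z) * trace (Dᵀ * z) - trace (Cᵀ * z * (Dᵀ * z)) := by
  have hC : linearForm C = fun w => trace (Cᵀ * w) := funext (linearForm_eq_trace C)
  have hD : linearForm D = fun w => trace (Dᵀ * w) := funext (linearForm_eq_trace D)
  rw [hC, hD, kappaU_trace_mul, sub_eq_add_neg]

lemma linearForm_mul_add_kappaU_vecMulVec_same_left (u v w : Fin n → ℂ)
    (z : Matrix (Fin n) (Fin n) ℂ) :
    linearForm (vecMulVec u v) z * linearForm (vecMulVec u w) z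
      + kappaU n (linearForm (vecMulVec u v)) (linearForm (vecMulVec u w)) z = 0 := by
  rw [linearForm_mul_add_kappaU, transpose_vecMulVec, transpose_vecMulVec, vecMulVec_mul,
    vecMulVec_mul, trace_vecMulVec_mul_vecMulVec_same_right, sub_self]

lemma linearForm_mul_add_kappaU_vecMulVec_same_right (u w v : Fin n → ℂ)
    (z : Matrix (Fin n) (Fin n) ℂ) :
    linearForm (vecMulVec u v) z * linearForm (vecMulVec w v) z
      + kappaU n (linearForm (vecMulVec u v)) (linearForm (vecMulVec w v)) z = 0 := by
  rw [linearForm_mul_add_kappaU, transpose_vecMulVec, transpose_vecMulVec, vecMulVec_mul,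
    vecMulVec_mul, trace_vecMulVec_mul_vecMulVec_same_left, sub_self]

end KappaU

theorem stmt_2_general (n : ℕ) (a q : Fin n → ℂ) (hq : q ≠ 0)
    (p : Matrix (Fin n) (Fin n) ℂ)
    (hcase :
      (∀ α : Fin n, ∃ c d : ℂ, (c ≠ 0 ∨ d ≠ 0) ∧ ∀ j : Fin n, c * p j α + d * q j = 0) ∨
      (∃ β₀ : Fin n, (∀ β : Fin n, β ≠ β₀ → a β = 0) ∧
        (∀ α : Fin n, α ≠ β₀ → ∀ j : Fin n, p j α = 0))) :
    ∀ z ∈ Matrix.unitaryGroup (Fin n) ℂ,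
      (∑ j : Fin n, ∑ α : Fin n, p j α * z j α)
          * (∑ k : Fin n, ∑ β : Fin n, q k * a β * z k β)
        + kappaU n (fun w => ∑ j : Fin n, ∑ α : Fin n, p j α * w j α)
            (fun w => ∑ k : Fin n, ∑ β : Fin n, q k * a β * w k β) z = 0 := by
  intro z _
  change linearForm p z * linearForm (vecMulVec q a) z
    + kappaU n (linearForm p) (linearForm (vecMulVec q a)) z = 0
  rcases hcase with hcol | ⟨β₀, ha, hp⟩
  · obtain ⟨c, rfl⟩ := eq_vecMulVec_of_col_dependent hq hcol
    exact linearForm_mul_add_kappaU_vecMulVec_same_left q c a z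
  · have hQ : ∀ β, β ≠ β₀ → ∀ k, vecMulVec q a k β = 0 := fun β hβ k => by
      simp [vecMulVec_apply, ha β hβ]
    rw [eq_vecMulVec_single_of_col_eq_zero β₀ hp, eq_vecMulVec_single_of_col_eq_zero β₀ hQ]
    exact linearForm_mul_add_kappaU_vecMulVec_same_right _ _ _ z

/-- Theorem 4.4 (1), sufficiency: if (i) the vector `q` and each column of `M_P` are
linearly dependent, or (ii) the vector `a` and the matrix `M_P` are concentrated in a
single column `β₀`, then `PQ + κ(P,Q) = 0` on `U(n)`, i.e. `f = P/Q` is harmonic. -/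
theorem stmt_2 (n : ℕ) (hn : 0 < n) (a q : Fin n → ℂ) (ha : a ≠ 0) (hq : q ≠ 0)
    (p : Matrix (Fin n) (Fin n) ℂ) (hp : p ≠ 0)
    (hcase :
      (∀ α : Fin n, ∃ c d : ℂ, (c ≠ 0 ∨ d ≠ 0) ∧ ∀ j : Fin n, c * p j α + d * q j = 0) ∨
      (∃ β₀ : Fin n, (∀ β : Fin n, β ≠ β₀ → a β = 0) ∧
        (∀ α : Fin n, α ≠ β₀ → ∀ j : Fin n, p j α = 0))) :
    ∀ z ∈ Matrix.unitaryGroup (Fin n) ℂ,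
      (∑ j : Fin n, ∑ α : Fin n, p j α * z j α)
          * (∑ k : Fin n, ∑ β : Fin n, q k * a β * z k β)
        + kappaU n (fun w => ∑ j : Fin n, ∑ α : Fin n, p j α * w j α)
            (fun w => ∑ k : Fin n, ∑ β : Fin n, q k * a β * w k β) z = 0 :=
  stmt_2_general n a q hq p hcase
end

section
/- Let λ, μ ∈ ℂ and let P, Q, T ∈ A with Q invertible satisfy τ(P) = λ·P, τ(Q) = λ·Q, κ(Q,Q) = μ·Q², κ(P,Q) = μ·T, κ(T,Q) = 2μ·Q·T, and τ(T) = 2λ·T + 2μ·P·Q. Then the element f = P·Q⁻¹ satisfies τ(f) = 2μ·(P·Q − T)·Q⁻², and τ(τ(f)) = 0; in particular f is biharmonic, and f is harmonic if and only if μ·(P·Q − T) = 0. (For U(n) with λ = −n, μ = −1 and T = Σ_α R_α·S_α this is the computation proving that the quotients f = P/Q of Theorem 4.4 are proper biharmonic whenever PQ + κ(P,Q) ≠ 0.) -/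
/-- Abstract version of the biharmonicity computation of Theorem 4.4: if `P`, `Q`, `T`
satisfy `τ(P) = λP`, `τ(Q) = λQ`, `κ(Q,Q) = μQ²`, `κ(P,Q) = μT`, `κ(T,Q) = 2μQT` and
`τ(T) = 2λT + 2μPQ`, then `f = P·Q⁻¹` satisfies `τ(f) = 2μ(PQ - T)Q⁻²` and
`τ(τ(f)) = 0`; moreover `f` is harmonic iff `μ(PQ - T) = 0`. -/
theorem stmt_3 {A : Type*} [CommRing A] [Algebra ℂ A]
    (tau : A → A) (kappa : A → A → A)
    (htau_lin : IsLinearMap ℂ tau)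
    (hk_symm : ∀ f g : A, kappa f g = kappa g f)
    (hk_lin : ∀ f : A, IsLinearMap ℂ (kappa f))
    (hk_leib : ∀ f g h : A, kappa (f * g) h = f * kappa g h + g * kappa f h)
    (htau_prod : ∀ f g : A, tau (f * g) = tau f * g + 2 * kappa f g + f * tau g)
    (lam mu : ℂ) (P Q T : A) [Invertible Q]
    (hP : tau P = lam • P) (hQ : tau Q = lam • Q)
    (hQQ : kappa Q Q = mu • (Q * Q))
    (hPQ : kappa P Q = mu • T)
    (hTQ : kappa T Q = (2 * mu) • (Q * T))
    (hT : tau T = (2 * lam) • T + (2 * mu) • (P * Q))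
    (f : A) (hf : f = P * ⅟Q) :
    tau f = (2 * mu) • ((P * Q - T) * (⅟Q * ⅟Q)) ∧
    tau (tau f) = 0 ∧
    (tau f = 0 ↔ mu • (P * Q - T) = 0) := by
  have hQR : Q * ⅟Q = 1 := mul_invOf_self Q
  set R := ⅟Q with hRdef
  have hk1 : ∀ x : A, kappa 1 x = 0 := by
    intro x
    have h := hk_leib 1 1 x
    rw [one_mul] at h
    linear_combination -h
  have htau1 : tau 1 = 0 := by
    have h := htau_prod 1 1
    have h1 := hk1 1
    rw [one_mul] at h
    linear_combination -h - 2 * h1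
  simp only [Algebra.smul_def, map_mul, map_ofNat] at hP hQ hQQ hPQ hTQ hT
  set l : A := algebraMap ℂ A lam with hl
  set m : A := algebraMap ℂ A mu with hm
  have hkR : ∀ x : A, kappa R x = -(R * R * kappa Q x) := by
    intro x
    have h := hk_leib Q R x
    rw [hQR, hk1] at h
    linear_combination (-R) * h - kappa R x * hQR
  have htauR : tau R = (2 * m - l) * R := by
    have h := htau_prod Q R
    rw [hQR, htau1, hQ, hk_symm Q R, hkR Q, hQQ] at h
    linear_combination (-R) * h + (-tau R + (2*m - l)*R + 2*m*R*R*Q) * hQR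
  have htauf : tau f = 2 * m * ((P * Q - T) * (R * R)) := by
    have h := htau_prod P R
    rw [hP, hk_symm P R, hkR P, hk_symm Q P, hPQ, htauR, ← hf] at h
    linear_combination h + (l*P*R - m*T*R*R*Q + (-l*P + 2*m*P)*R - 2*m*P*R - 2*m*P*R + m*R*R*T*Q) * hQR

  have hkQR : kappa Q R = -m := by
    rw [hk_symm Q R, hkR Q, hQQ]
    linear_combination (-(R*m*Q) - m) * hQR
  have hkRR : kappa R R = m * (R * R) := by
    rw [hkR R, hkQR]
    ring
  have htauR2 : tau (R * R) = (6 * m - 2 * l) * (R * R) := by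
    have h := htau_prod R R
    rw [htauR, hkRR] at h
    linear_combination h
  have htauW : tau (P * Q - T) = (2 * l - 2 * m) * (P * Q - T) := by
    have hsub := (IsLinearMap.mk' tau htau_lin).map_sub (P * Q) T
    simp only [IsLinearMap.mk'_apply] at hsub
    rw [hsub, htau_prod P Q, hP, hQ, hPQ, hT]
    ring
  have hkWQ : kappa (P * Q - T) Q = m * (Q * (P * Q - T)) := by
    have hsub := ((hk_lin Q).mk' _).map_sub (P * Q) T
    simp only [IsLinearMap.mk'_apply] at hsub
    rw [hk_symm _ Q, hsub, hk_symm Q (P*Q), hk_leib P Q Q, hQQ, hk_symm Q T, hTQ, hPQ]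
    ring
  have hkWR : kappa (P * Q - T) R = -(m * (R * (P * Q - T))) := by
    rw [hk_symm _ R, hkR, hk_symm Q _, hkWQ]
    linear_combination (-(R*R*m*(P*Q-T)) - m*R*(P*Q-T) + R*R*m*(Q*P - T)) * hQR
  have htauWR2 : tau ((P * Q - T) * (R * R)) = 0 := by
    have h := htau_prod (P * Q - T) (R * R)
    rw [htauW, htauR2, hk_symm _ (R * R), hk_leib R R (P * Q - T),
      hk_symm R (P * Q - T), hkWR] at h
    linear_combination h
  have htauf_smul : tau f = (2 * mu) • ((P * Q - T) * (R * R)) := by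
    rw [htauf, Algebra.smul_def, map_mul, map_ofNat, ← hm]
  refine ⟨htauf_smul, ?_, ?_⟩
  · rw [htauf_smul, htau_lin.map_smul, htauWR2, smul_zero]
  · constructor
    · intro h0
      rw [htauf_smul] at h0
      have h1 : (2 * mu) • ((P * Q - T) * (R * R)) * (Q * Q) = 0 := by
        rw [h0, zero_mul]
      rw [smul_mul_assoc] at h1
      have hclean : (P * Q - T) * (R * R) * (Q * Q) = P * Q - T := by
        linear_combination ((P * Q - T) * (R * Q + 1)) * hQR
      rw [hclean] at h1
      have h2 : mu • (P * Q - T) = (2⁻¹ : ℂ) • ((2 * mu) • (P * Q - T)) := by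
        rw [smul_smul]
        congr 1
        ring
      rw [h2, h1, smul_zero]
    · intro h0
      rw [htauf_smul, mul_smul, ← smul_mul_assoc, h0, zero_mul, smul_zero]
end

section
/- The element f = P·Q⁻¹ satisfies: (1) κ(f, f) = f·τ(f); (2) κ(f, τ(f)) = τ(f)²; (3) κ(τ(f), τ(f)) = −2·τ(f)². -/
/-- Lemma 5.1: the quotient `f = P·Q⁻¹` satisfies `κ(f,f) = f·τ(f)`,
`κ(f,τ(f)) = τ(f)²` and `κ(τ(f),τ(f)) = -2·τ(f)²`. -/
theorem stmt_4 {A : Type*} [CommRing A] [Algebra ℂ A]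
    (tau : A → A) (kappa : A → A → A)
    (htau_lin : IsLinearMap ℂ tau)
    (hk_symm : ∀ f g : A, kappa f g = kappa g f)
    (hk_lin : ∀ f : A, IsLinearMap ℂ (kappa f))
    (hk_leib : ∀ f g h : A, kappa (f * g) h = f * kappa g h + g * kappa f h)
    (htau_prod : ∀ f g : A, tau (f * g) = tau f * g + 2 * kappa f g + f * tau g)
    (lam : ℂ) (P Q R S : A) [Invertible Q]
    (hP : tau P = lam • P) (hQ : tau Q = lam • Q)
    (hR : tau R = lam • R) (hS : tau S = lam • S)
    (hPP : kappa P P = -(P * P)) (hQQ : kappa Q Q = -(Q * Q))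
    (hRR : kappa R R = -(R * R)) (hSS : kappa S S = -(S * S))
    (hPQ : kappa P Q = -(R * S)) (hRS : kappa R S = -(P * Q))
    (hPR : kappa P R = -(P * R)) (hPS : kappa P S = -(P * S))
    (hQR : kappa Q R = -(Q * R)) (hQS : kappa Q S = -(Q * S))
    (f : A) (hf : f = P * ⅟Q) :
    kappa f f = f * tau f ∧
    kappa f (tau f) = tau f ^ 2 ∧
    kappa (tau f) (tau f) = -(2 * tau f ^ 2) := by
  subst hf
  rw [Algebra.smul_def] at hP hQ
  set q := ⅟Q with hqdef
  have hq1 : q * Q = 1 := by rw [hqdef]; exact invOf_mul_self Q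
  have hQq : Q * q = 1 := by rw [hqdef]; exact mul_invOf_self Q
  -- κ(1, h) = 0
  have hk1 : ∀ h : A, kappa 1 h = 0 := by
    intro h
    have h0 := hk_leib 1 1 h
    simp only [one_mul] at h0
    linear_combination -h0
  -- κ(q, h) = -q² κ(Q, h)
  have hkq : ∀ h : A, kappa q h = -(q * q) * kappa Q h := by
    intro h
    have h0 := hk_leib Q q h
    rw [hQq, hk1 h] at h0
    linear_combination (-q) * h0 - kappa q h * hq1
  have hkqQ : kappa q Q = 1 := by
    rw [hkq Q, hQQ]; linear_combination (q * Q + 1) * hq1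
  have hkqP : kappa q P = q * q * (R * S) := by
    rw [hkq P, hk_symm Q P, hPQ]; ring
  have hkqR : kappa q R = q * R := by
    rw [hkq R, hQR]; linear_combination q * R * hq1
  have hkqS : kappa q S = q * S := by
    rw [hkq S, hQS]; linear_combination q * S * hq1
  have hkqq : kappa q q = -(q * q) := by
    rw [hkq q, hk_symm Q q, hkqQ]; ring
  -- τ(1) = 0
  have ht1 : tau 1 = 0 := by
    have h0 := htau_prod 1 1
    simp only [one_mul, mul_one] at h0
    rw [hk1 1] at h0
    linear_combination -h0
  -- τ(q)
  have htq : tau q = -(algebraMap ℂ A lam * q) - 2 * q := by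
    have h0 := htau_prod Q q
    rw [hQq, ht1, hQ, hk_symm Q q, hkqQ] at h0
    linear_combination (-q) * h0 - (tau q + algebraMap ℂ A lam * q) * hq1
  -- τ(f)
  have htf : tau (P * q) = 2 * (q * q * (R * S)) - 2 * (P * q) := by
    have h0 := htau_prod P q
    rw [hP, htq, hk_symm P q, hkqP] at h0
    linear_combination h0
  -- bilinearity helper
  have hbil : ∀ x a b : A, kappa x (2 * a - 2 * b) = 2 * kappa x a - 2 * kappa x b := by
    intro x a b
    have h1 : (2 : A) * a - 2 * b = (2 : ℂ) • a - (2 : ℂ) • b := by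
      rw [two_smul, two_smul]; ring
    rw [h1]
    have h2 : kappa x ((2 : ℂ) • a - (2 : ℂ) • b)
        = (IsLinearMap.mk' _ (hk_lin x)) ((2 : ℂ) • a - (2 : ℂ) • b) := rfl
    rw [h2, map_sub, map_smul, map_smul, IsLinearMap.mk'_apply, IsLinearMap.mk'_apply,
        two_smul, two_smul]
    ring
  -- composite kappas
  have a1 : kappa (P * q) q = -(P * (q * q)) + q * (q * q) * (R * S) := by
    linear_combination hk_leib P q q + P * hkqq + q * ((hk_symm P q).trans hkqP)
  have a2 : kappa (P * q) P = P * (q * q) * (R * S) - q * (P * P) := by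
    linear_combination hk_leib P q P + P * hkqP + q * hPP
  have a3 : kappa (P * q) R = 0 := by
    linear_combination hk_leib P q R + P * hkqR + q * hPR
  have a4 : kappa (P * q) S = 0 := by
    linear_combination hk_leib P q S + P * hkqS + q * hPS
  have kvv : kappa (P * q) (P * q) = 2 * (q * q * q) * (P * (R * S)) - 2 * (q * q * (P * P)) := by
    linear_combination hk_leib P q (P * q) + P * ((hk_symm q (P * q)).trans a1)
      + q * ((hk_symm P (P * q)).trans a2)
  have hq2 : ∀ x : A, kappa (q * q) x = 2 * (q * kappa q x) := by
    intro x; linear_combination hk_leib q q x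
  have sRq : kappa R q = q * R := (hk_symm R q).trans hkqR
  have sSq : kappa S q = q * S := (hk_symm S q).trans hkqS
  have e1 : kappa (R * S) S = -(R * (S * S)) - S * (P * Q) := by
    linear_combination hk_leib R S S + R * hSS + S * hRS
  have e2 : kappa (R * S) R = -(R * (P * Q)) - S * (R * R) := by
    linear_combination hk_leib R S R + R * ((hk_symm S R).trans hRS) + S * hRR
  have d1 : kappa (R * S) (R * S) = -(2 * ((R * S) * (R * S))) - 2 * (P * Q * (R * S)) := by
    linear_combination hk_leib R S (R * S) + R * ((hk_symm S (R * S)).trans e1)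
      + S * ((hk_symm R (R * S)).trans e2)
  have d2 : kappa (R * S) q = 2 * (q * (R * S)) := by
    linear_combination hk_leib R S q + R * sSq + S * sRq
  have f1 : kappa (q * q * (R * S)) (R * S)
      = 2 * ((q * q) * ((R * S) * (R * S))) - 2 * ((q * q) * (P * Q * (R * S))) := by
    linear_combination hk_leib (q * q) (R * S) (R * S) + (q * q) * d1
      + (R * S) * (hq2 (R * S)) + 2 * q * (R * S) * ((hk_symm q (R * S)).trans d2)
  have f2 : kappa (q * q * (R * S)) q = 0 := by
    linear_combination hk_leib (q * q) (R * S) q + (q * q) * d2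
      + (R * S) * (hq2 q) + 2 * q * (R * S) * hkqq
  have g1 : kappa (R * S) (P * q) = 0 := by
    linear_combination hk_leib R S (P * q) + R * ((hk_symm S (P * q)).trans a4)
      + S * ((hk_symm R (P * q)).trans a3)
  have kuu : kappa (q * q * (R * S)) (q * q * (R * S))
      = 2 * (q * q * q * q) * ((R * S) * (R * S)) - 2 * ((q * q * q) * (P * (R * S))) := by
    linear_combination hk_leib (q * q) (R * S) (q * q * (R * S))
      + (q * q) * ((hk_symm (R * S) (q * q * (R * S))).trans f1)
      + (R * S) * (hq2 (q * q * (R * S)))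
      + 2 * q * (R * S) * ((hk_symm q (q * q * (R * S))).trans f2)
      - 2 * (q * q * q) * (P * (R * S)) * hq1
  have kuv : kappa (q * q * (R * S)) (P * q)
      = 2 * (q * q * q * q) * ((R * S) * (R * S)) - 2 * ((q * q * q) * (P * (R * S))) := by
    linear_combination hk_leib (q * q) (R * S) (P * q) + (q * q) * g1
      + (R * S) * (hq2 (P * q)) + 2 * q * (R * S) * ((hk_symm q (P * q)).trans a1)
  refine ⟨?_, ?_, ?_⟩
  · rw [htf]
    linear_combination kvv
  · rw [htf, hbil]
    linear_combination 2 * ((hk_symm (P * q) (q * q * (R * S))).trans kuv) - 2 * kvv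
  · rw [htf, hbil, hk_symm (2 * (q * q * (R * S)) - 2 * (P * q)) (q * q * (R * S)),
        hk_symm (2 * (q * q * (R * S)) - 2 * (P * q)) (P * q), hbil, hbil]
    linear_combination 4 * kuu - 4 * kuv
      - 4 * ((hk_symm (P * q) (q * q * (R * S))).trans kuv) + 4 * kvv
end

section
/- For all positive integers ℓ and m the element f = P·Q⁻¹ satisfies: (1) κ(f^ℓ, τ(f)^m) = ℓ·m·f^{ℓ−1}·τ(f)^{m+1}; (2) κ(f^ℓ, f^m) = ℓ·m·f^{ℓ+m−1}·τ(f); (3) τ(f^ℓ) = ℓ²·f^{ℓ−1}·τ(f); (4) κ(τ(f)^ℓ, τ(f)^m) = −2·ℓ·m·τ(f)^{ℓ+m}; (5) τ(τ(f)^ℓ) = −2·ℓ·(ℓ−1)·τ(f)^ℓ. -/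
/-- Lemma 5.2: for positive integers `ℓ, m` the quotient `f = P·Q⁻¹` satisfies
(1) `κ(f^ℓ, τ(f)^m) = ℓm·f^{ℓ-1}·τ(f)^{m+1}`,
(2) `κ(f^ℓ, f^m) = ℓm·f^{ℓ+m-1}·τ(f)`,
(3) `τ(f^ℓ) = ℓ²·f^{ℓ-1}·τ(f)`,
(4) `κ(τ(f)^ℓ, τ(f)^m) = -2ℓm·τ(f)^{ℓ+m}`,
(5) `τ(τ(f)^ℓ) = -2ℓ(ℓ-1)·τ(f)^ℓ`. -/
theorem stmt_5 {A : Type*} [CommRing A] [Algebra ℂ A]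
    (tau : A → A) (kappa : A → A → A)
    (htau_lin : IsLinearMap ℂ tau)
    (hk_symm : ∀ f g : A, kappa f g = kappa g f)
    (hk_lin : ∀ f : A, IsLinearMap ℂ (kappa f))
    (hk_leib : ∀ f g h : A, kappa (f * g) h = f * kappa g h + g * kappa f h)
    (htau_prod : ∀ f g : A, tau (f * g) = tau f * g + 2 * kappa f g + f * tau g)
    (lam : ℂ) (P Q R S : A) [Invertible Q]
    (hP : tau P = lam • P) (hQ : tau Q = lam • Q)
    (hR : tau R = lam • R) (hS : tau S = lam • S)
    (hPP : kappa P P = -(P * P)) (hQQ : kappa Q Q = -(Q * Q))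
    (hRR : kappa R R = -(R * R)) (hSS : kappa S S = -(S * S))
    (hPQ : kappa P Q = -(R * S)) (hRS : kappa R S = -(P * Q))
    (hPR : kappa P R = -(P * R)) (hPS : kappa P S = -(P * S))
    (hQR : kappa Q R = -(Q * R)) (hQS : kappa Q S = -(Q * S))
    (f : A) (hf : f = P * ⅟Q)
    (ℓ m : ℕ) (hℓ : 0 < ℓ) (hm : 0 < m) :
    kappa (f ^ ℓ) (tau f ^ m) = ((ℓ : ℂ) * m) • (f ^ (ℓ - 1) * tau f ^ (m + 1)) ∧
    kappa (f ^ ℓ) (f ^ m) = ((ℓ : ℂ) * m) • (f ^ (ℓ + m - 1) * tau f) ∧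
    tau (f ^ ℓ) = ((ℓ : ℂ) ^ 2) • (f ^ (ℓ - 1) * tau f) ∧
    kappa (tau f ^ ℓ) (tau f ^ m) = (-2 * (ℓ : ℂ) * m) • (tau f ^ (ℓ + m)) ∧
    tau (tau f ^ ℓ) = (-2 * (ℓ : ℂ) * ((ℓ : ℂ) - 1)) • (tau f ^ ℓ) := by
  set u : A := ⅟Q with hud
  have hu : Q * u = 1 := mul_invOf_self Q
  have hP' : tau P = algebraMap ℂ A lam * P := by rw [hP, Algebra.smul_def]
  have hQ' : tau Q = algebraMap ℂ A lam * Q := by rw [hQ, Algebra.smul_def]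
  have hR' : tau R = algebraMap ℂ A lam * R := by rw [hR, Algebra.smul_def]
  have hS' : tau S = algebraMap ℂ A lam * S := by rw [hS, Algebra.smul_def]
  have k1 : ∀ y : A, kappa 1 y = 0 := by
    intro y
    have h := hk_leib 1 1 y
    rw [one_mul] at h
    linear_combination -h
  have t1 : tau (1 : A) = 0 := by
    have h := htau_prod 1 1
    rw [one_mul, k1] at h
    linear_combination -h
  have ku : ∀ y : A, kappa u y = -(u * u * kappa Q y) := by
    intro y
    have h := hk_leib Q u y
    rw [hu, k1] at h
    linear_combination (-u) * h - (kappa u y) * hu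
  have tu : tau u = -(algebraMap ℂ A lam * u) - 2 * u := by
    have h := htau_prod Q u
    rw [hu, t1, hQ', hk_symm Q u, ku Q, hQQ] at h
    linear_combination (-u) * h - (tau u + algebraMap ℂ A lam * u + 2 * u * (1 + Q * u)) * hu
  have kT : ∀ y : A, kappa (R * S * (u * u)) y =
      -(2 * (R * S * (u * u * u)) * kappa Q y) + (u * u) * (R * kappa S y + S * kappa R y) := by
    intro y
    rw [hk_leib (R * S) (u * u) y, hk_leib u u y, hk_leib R S y, ku y]
    ring
  have tf : tau f = 2 * (R * S * (u * u)) - 2 * f := by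
    rw [hf, htau_prod P u, hP', tu, hk_symm P u, ku P, hk_symm Q P, hPQ]
    ring
  have kff : kappa f f = f * (2 * (R * S * (u * u)) - 2 * f) := by
    rw [hf, hk_leib P u (P * u), hk_symm u (P * u), hk_leib P u u, hk_symm P (P * u),
      hk_leib P u P, ku u, hk_symm P u, ku P, hk_symm Q P, hPQ, hk_symm Q u, ku Q, hQQ, hPP]
    linear_combination (-(P * P * (u * u)) * (Q * u + 1)) * hu
  have kfT : kappa f (R * S * (u * u)) =
      2 * ((R * S * (u * u)) * (R * S * (u * u))) - 2 * (f * (R * S * (u * u))) := by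
    rw [hf, hk_symm (P * u) (R * S * (u * u)), kT (P * u),
      hk_symm Q (P * u), hk_leib P u Q, hk_symm S (P * u), hk_leib P u S,
      hk_symm R (P * u), hk_leib P u R, ku Q, ku S, ku R, hQQ, hQS, hQR, hPQ, hPS, hPR]
    linear_combination (-(2 * (P * Q * R * S * (u * u * (u * u))))) * hu
  have kTT' : kappa (R * S * (u * u)) (R * S * (u * u)) =
      2 * ((R * S * (u * u)) * (R * S * (u * u))) - 2 * (f * (R * S * (u * u))) := by
    rw [hf, kT (R * S * (u * u)), hk_symm Q (R * S * (u * u)), hk_symm S (R * S * (u * u)),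
      hk_symm R (R * S * (u * u)), kT Q, kT S, kT R, hk_symm S Q, hk_symm R Q, hk_symm S R,
      hQQ, hSS, hRR, hQS, hQR, hRS]
    linear_combination ((-(4 * (R * R * (S * S)) * (u * u * (u * u)))) * (Q * u - 1)
      - 2 * (P * R * S * (u * u * u))) * hu
  have tauT : tau (R * S * (u * u)) = 2 * (R * S * (u * u)) - 2 * f := by
    rw [hf, htau_prod (R * S) (u * u), htau_prod R S, htau_prod u u, hR', hS', tu,
      hk_leib R S (u * u), hk_symm S (u * u), hk_symm R (u * u), hk_leib u u S,
      hk_leib u u R, ku S, ku R, ku u, hRS, hk_symm Q u, ku Q, hQQ, hQS, hQR]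
    linear_combination (-(2 * (P * u)) - 2 * (R * S * (u * u)) * (Q * u - 3)) * hu
  have kadd2 : ∀ y a b : A, kappa y (a + b) = kappa y a + kappa y b :=
    fun y a b => (hk_lin y).map_add a b
  have ksub2 : ∀ y a b : A, kappa y (a - b) = kappa y a - kappa y b :=
    fun y a b => (hk_lin y).map_sub a b
  have kadd1 : ∀ y a b : A, kappa (a + b) y = kappa a y + kappa b y := by
    intro y a b
    rw [hk_symm (a + b) y, kadd2 y a b, hk_symm y a, hk_symm y b]
  have ksub1 : ∀ y a b : A, kappa (a - b) y = kappa a y - kappa b y := by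
    intro y a b
    rw [hk_symm (a - b) y, ksub2 y a b, hk_symm y a, hk_symm y b]
  have B1 : kappa f f = f * tau f := by rw [kff, tf]
  have B2 : kappa f (tau f) = tau f * tau f := by
    rw [tf]
    simp only [two_mul]
    simp only [ksub1, kadd1, ksub2, kadd2]
    rw [kfT, kff]
    ring
  have B3 : kappa (tau f) (tau f) = -(2 * (tau f * tau f)) := by
    rw [tf]
    simp only [two_mul]
    simp only [ksub1, kadd1, ksub2, kadd2]
    rw [hk_symm (R * S * (u * u)) f, kff, kfT, kTT']
    ring
  have B4 : tau (tau f) = 0 := by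
    rw [tf]
    simp only [two_mul]
    rw [htau_lin.map_sub, htau_lin.map_add, htau_lin.map_add, tauT, tf]
    ring
  -- power rule for kappa
  have powk : ∀ (a y : A) (n : ℕ), kappa (a ^ (n + 1)) y = ((n : ℂ) + 1) • (a ^ n * kappa a y) := by
    intro a y n
    induction n with
    | zero => simp
    | succ k ih =>
      have h : a ^ (k + 1 + 1) = a * a ^ (k + 1) := by ring
      rw [h, hk_leib a (a ^ (k + 1)) y, ih]
      push_cast
      simp only [Algebra.smul_def, map_add, map_one, map_mul, map_pow, map_natCast]
      ring
  have tpow : ∀ n : ℕ, tau (f ^ (n + 1)) = (((n : ℂ) + 1) ^ 2) • (f ^ n * tau f) := by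
    intro n
    induction n with
    | zero => simp
    | succ k ih =>
      have h : f ^ (k + 1 + 1) = f * f ^ (k + 1) := by ring
      rw [h, htau_prod f (f ^ (k + 1)), ih, hk_symm f (f ^ (k + 1)), powk f f k, B1]
      push_cast
      simp only [Algebra.smul_def, map_add, map_one, map_mul, map_pow, map_natCast]
      ring
  have tgpow : ∀ n : ℕ, tau (tau f ^ (n + 1)) = (-2 * ((n : ℂ) + 1) * (n : ℂ)) • (tau f ^ (n + 1)) := by
    intro n
    induction n with
    | zero => simp [B4]
    | succ k ih =>
      have h : tau f ^ (k + 1 + 1) = tau f * tau f ^ (k + 1) := by ring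
      rw [h, htau_prod (tau f) (tau f ^ (k + 1)), ih, hk_symm (tau f) (tau f ^ (k + 1)),
        powk (tau f) (tau f) k, B3, B4]
      push_cast
      simp only [Algebra.smul_def, map_add, map_one, map_mul, map_pow, map_neg, map_ofNat, map_natCast]
      ring
  obtain ⟨a, rfl⟩ : ∃ a, ℓ = a + 1 := ⟨ℓ - 1, by omega⟩
  obtain ⟨b, rfl⟩ : ∃ b, m = b + 1 := ⟨m - 1, by omega⟩
  refine ⟨?_, ?_, ?_, ?_, ?_⟩
  · rw [powk f (tau f ^ (b + 1)) a, hk_symm f (tau f ^ (b + 1)), powk (tau f) f b,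
      hk_symm (tau f) f, B2]
    simp only [Nat.add_sub_cancel]
    push_cast
    simp only [Algebra.smul_def, map_sub, map_add, map_one, map_mul, map_pow, map_neg, map_ofNat]
    push_cast
    try ring
  · rw [powk f (f ^ (b + 1)) a, hk_symm f (f ^ (b + 1)), powk f f b, B1]
    have e : a + 1 + (b + 1) - 1 = a + b + 1 := by omega
    rw [e]
    push_cast
    simp only [Algebra.smul_def, map_sub, map_add, map_one, map_mul, map_pow, map_neg, map_ofNat]
    push_cast
    try ring
  · rw [tpow a]
    simp only [Nat.add_sub_cancel]
    push_cast
    try simp only [Algebra.smul_def, map_sub, map_add, map_one, map_mul, map_pow, map_neg, map_ofNat]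
    try push_cast
    try ring
  · rw [powk (tau f) (tau f ^ (b + 1)) a, hk_symm (tau f) (tau f ^ (b + 1)),
      powk (tau f) (tau f) b, B3]
    push_cast
    simp only [Algebra.smul_def, map_sub, map_add, map_one, map_mul, map_pow, map_neg, map_ofNat]
    push_cast
    try ring
  · rw [tgpow a]
    push_cast
    simp only [Algebra.smul_def, map_sub, map_add, map_one, map_mul, map_pow, map_neg, map_ofNat]
    push_cast
    try ring
end

section
/- Let d be a positive integer and let c_0, c_1, …, c_d ∈ ℂ satisfy c_0 = 0 and 2·k·(k+1)·c_{k+1} = (d² − k²)·c_k for k = 1, …, d−1. Then the element Φ_d(f) = Σ_{k=0}^d c_k · f^{d−k} · τ(f)^k (with f = P·Q⁻¹) is harmonic: τ(Φ_d(f)) = 0. -/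
private lemma kpow_aux {A : Type*} [CommRing A] (kappa : A → A → A)
    (hk_leib : ∀ f g h : A, kappa (f * g) h = f * kappa g h + g * kappa f h) :
    ∀ (a : A) (m : ℕ) (h : A), kappa (a ^ (m + 1)) h = ((m : A) + 1) * (a ^ m * kappa a h) := by
  intro a m
  induction m with
  | zero => intro h; simp only [pow_one, pow_zero, Nat.cast_zero]; ring
  | succ m ih =>
      intro h
      rw [pow_succ, hk_leib, ih h]
      push_cast
      ring

private lemma taupow_x {A : Type*} [CommRing A] (tau : A → A) (kappa : A → A → A)
    (hk_symm : ∀ f g : A, kappa f g = kappa g f)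
    (hk_leib : ∀ f g h : A, kappa (f * g) h = f * kappa g h + g * kappa f h)
    (htau_prod : ∀ f g : A, tau (f * g) = tau f * g + 2 * kappa f g + f * tau g)
    (x y : A) (hxy : tau x = y) (hxx : kappa x x = x * y) :
    ∀ m : ℕ, tau (x ^ (m + 1)) = ((m : A) + 1) ^ 2 * (x ^ m * y) := by
  intro m
  induction m with
  | zero => simpa using hxy
  | succ m ih =>
      rw [pow_succ', htau_prod, hxy, hk_symm x (x ^ (m + 1)),
        kpow_aux kappa hk_leib x m x, hxx, ih]
      push_cast
      ring

private lemma taupow_y {A : Type*} [CommRing A] (tau : A → A) (kappa : A → A → A)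
    (hk_symm : ∀ f g : A, kappa f g = kappa g f)
    (hk_leib : ∀ f g h : A, kappa (f * g) h = f * kappa g h + g * kappa f h)
    (htau_prod : ∀ f g : A, tau (f * g) = tau f * g + 2 * kappa f g + f * tau g)
    (y : A) (hty : tau y = 0) (hyy : kappa y y = -(2 * (y * y))) :
    ∀ k : ℕ, tau (y ^ (k + 1)) = -(2 * ((k : A) + 1) * (k : A)) * y ^ (k + 1) := by
  intro k
  induction k with
  | zero => rw [pow_one, hty]; push_cast; ring
  | succ k ih =>
      rw [pow_succ', htau_prod, hty, hk_symm y (y ^ (k + 1)),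
        kpow_aux kappa hk_leib y k y, hyy, ih]
      push_cast
      ring

private lemma kxy_pow {A : Type*} [CommRing A] (kappa : A → A → A)
    (hk_symm : ∀ f g : A, kappa f g = kappa g f)
    (hk_leib : ∀ f g h : A, kappa (f * g) h = f * kappa g h + g * kappa f h)
    (hk1 : ∀ h : A, kappa h 1 = 0)
    (x y : A) (hxy2 : kappa x y = y * y) :
    ∀ k : ℕ, kappa x (y ^ k) = (k : A) * y ^ (k + 1) := by
  intro k
  cases k with
  | zero => rw [pow_zero, hk1]; simp
  | succ k =>
      rw [hk_symm, kpow_aux kappa hk_leib y k x, hk_symm y x, hxy2]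
      push_cast
      ring

private lemma main_pow {A : Type*} [CommRing A] (tau : A → A) (kappa : A → A → A)
    (hk_symm : ∀ f g : A, kappa f g = kappa g f)
    (hk_leib : ∀ f g h : A, kappa (f * g) h = f * kappa g h + g * kappa f h)
    (htau_prod : ∀ f g : A, tau (f * g) = tau f * g + 2 * kappa f g + f * tau g)
    (hk1 : ∀ h : A, kappa h 1 = 0)
    (x y : A) (hxy : tau x = y) (hxx : kappa x x = x * y) (hxy2 : kappa x y = y * y) :
    ∀ m k : ℕ, tau (x ^ (m + 1) * y ^ k) =
      (((m : A) + 1) ^ 2 + 2 * ((m : A) + 1) * (k : A)) * (x ^ m * y ^ (k + 1))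
        + x ^ (m + 1) * tau (y ^ k) := by
  intro m k
  rw [htau_prod, taupow_x tau kappa hk_symm hk_leib htau_prod x y hxy hxx m,
    kpow_aux kappa hk_leib x m (y ^ k),
    kxy_pow kappa hk_symm hk_leib hk1 x y hxy2 k]
  ring

/-- Proposition 5.3 (sufficiency): if `c₀ = 0` and `2k(k+1)c_{k+1} = (d² - k²)c_k` for
`k = 1, …, d-1`, then `Φ_d(f) = Σ_{k=0}^d c_k f^{d-k} τ(f)^k` is harmonic. -/
theorem stmt_6 {A : Type*} [CommRing A] [Algebra ℂ A]
    (tau : A → A) (kappa : A → A → A)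
    (htau_lin : IsLinearMap ℂ tau)
    (hk_symm : ∀ f g : A, kappa f g = kappa g f)
    (hk_lin : ∀ f : A, IsLinearMap ℂ (kappa f))
    (hk_leib : ∀ f g h : A, kappa (f * g) h = f * kappa g h + g * kappa f h)
    (htau_prod : ∀ f g : A, tau (f * g) = tau f * g + 2 * kappa f g + f * tau g)
    (lam : ℂ) (P Q R S : A) [Invertible Q]
    (hP : tau P = lam • P) (hQ : tau Q = lam • Q)
    (hR : tau R = lam • R) (hS : tau S = lam • S)
    (hPP : kappa P P = -(P * P)) (hQQ : kappa Q Q = -(Q * Q))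
    (hRR : kappa R R = -(R * R)) (hSS : kappa S S = -(S * S))
    (hPQ : kappa P Q = -(R * S)) (hRS : kappa R S = -(P * Q))
    (hPR : kappa P R = -(P * R)) (hPS : kappa P S = -(P * S))
    (hQR : kappa Q R = -(Q * R)) (hQS : kappa Q S = -(Q * S))
    (f : A) (hf : f = P * ⅟Q)
    (d : ℕ) (hd : 0 < d) (c : ℕ → ℂ) (hc0 : c 0 = 0)
    (hrec : ∀ k : ℕ, 1 ≤ k → k ≤ d - 1 →
      2 * (k : ℂ) * ((k : ℂ) + 1) * c (k + 1) = ((d : ℂ) ^ 2 - (k : ℂ) ^ 2) * c k) :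
    tau (∑ k ∈ Finset.range (d + 1), c k • (f ^ (d - k) * tau f ^ k)) = 0 := by
  -- scalar action as multiplication
  have hP' : tau P = algebraMap ℂ A lam * P := by rw [hP, Algebra.smul_def]
  have hQ' : tau Q = algebraMap ℂ A lam * Q := by rw [hQ, Algebra.smul_def]
  have hR' : tau R = algebraMap ℂ A lam * R := by rw [hR, Algebra.smul_def]
  have hS' : tau S = algebraMap ℂ A lam * S := by rw [hS, Algebra.smul_def]
  -- structural consequences
  have hk1l : ∀ h : A, kappa 1 h = 0 := by
    intro h
    have h0 := hk_leib 1 1 h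
    simp only [one_mul, mul_one] at h0
    linear_combination -h0
  have hk1 : ∀ h : A, kappa h 1 = 0 := fun h => by rw [hk_symm]; exact hk1l h
  have hk_leibr : ∀ a b h : A, kappa h (a * b) = a * kappa h b + b * kappa h a := by
    intro a b h
    rw [hk_symm h (a * b), hk_leib, hk_symm b h, hk_symm a h]
  have hk2l : ∀ h : A, kappa 2 h = 0 := by
    intro h
    have : kappa ((1 : A) + 1) h = 0 := by
      rw [hk_symm, (hk_lin h).map_add, hk1, add_zero]
    simpa [one_add_one_eq_two] using this
  have hk2r : ∀ h : A, kappa h 2 = 0 := fun h => by rw [hk_symm]; exact hk2l h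
  have ht1 : tau 1 = 0 := by
    have h0 := htau_prod 1 1
    simp only [one_mul, mul_one, hk1l, mul_zero, add_zero] at h0
    linear_combination -h0
  have ht2 : tau (2 : A) = 0 := by
    have h0 : tau ((1 : A) + 1) = tau 1 + tau 1 := htau_lin.map_add 1 1
    rw [one_add_one_eq_two] at h0
    rw [h0, ht1, add_zero]
  -- kappa with ⅟Q
  have hQi : ∀ h : A, kappa (⅟Q) h = -(⅟Q * ⅟Q * kappa Q h) := by
    intro h
    have h0 := hk_leib Q (⅟Q) h
    rw [mul_invOf_self, hk1l] at h0
    linear_combination (-⅟Q) * h0 - kappa (⅟Q) h * invOf_mul_self Q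
  have ktP : kappa (⅟Q) P = ⅟Q * ⅟Q * (R * S) := by
    rw [hQi, hk_symm Q P, hPQ]; ring
  have kPt : kappa P (⅟Q) = ⅟Q * ⅟Q * (R * S) := by rw [hk_symm]; exact ktP
  have ktQ : kappa (⅟Q) Q = 1 := by
    rw [hQi, hQQ]
    linear_combination (⅟Q * Q + 1) * invOf_mul_self Q
  have ktR : kappa (⅟Q) R = R * ⅟Q := by
    rw [hQi, hQR]
    linear_combination (R * ⅟Q) * invOf_mul_self Q
  have kRt : kappa R (⅟Q) = R * ⅟Q := by rw [hk_symm]; exact ktR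
  have ktS : kappa (⅟Q) S = S * ⅟Q := by
    rw [hQi, hQS]
    linear_combination (S * ⅟Q) * invOf_mul_self Q
  have kSt : kappa S (⅟Q) = S * ⅟Q := by rw [hk_symm]; exact ktS
  have ktt : kappa (⅟Q) (⅟Q) = -(⅟Q * ⅟Q) := by
    rw [hQi, hk_symm Q (⅟Q), ktQ, mul_one]
  -- symmetric copies of generator values
  have hRP : kappa R P = -(P * R) := by rw [hk_symm]; exact hPR
  have hSP : kappa S P = -(P * S) := by rw [hk_symm]; exact hPS
  have hSR : kappa S R = -(P * Q) := by rw [hk_symm]; exact hRS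
  -- tau of ⅟Q
  have htQi : tau (⅟Q) = -(algebraMap ℂ A lam * ⅟Q) - 2 * ⅟Q := by
    have h0 := htau_prod Q (⅟Q)
    rw [mul_invOf_self, ht1, hQ', hk_symm Q (⅟Q), ktQ] at h0
    linear_combination (-⅟Q) * h0 - (tau (⅟Q) + algebraMap ℂ A lam * ⅟Q) * invOf_mul_self Q
  -- tau f explicitly
  have hgval : tau f = 2 * (R * S * (⅟Q * ⅟Q)) - 2 * (P * ⅟Q) := by
    rw [hf, htau_prod, hP', htQi, hk_symm P (⅟Q), ktP]
    ring
  -- additivity / subtraction lemmas for kappa and tau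
  have ksubr : ∀ h x y : A, kappa h (x - y) = kappa h x - kappa h y := by
    intro h x y
    exact (IsLinearMap.mk' _ (hk_lin h)).map_sub x y
  have ksubl : ∀ x y h : A, kappa (x - y) h = kappa x h - kappa y h := by
    intro x y h
    rw [hk_symm, ksubr, hk_symm h x, hk_symm h y]
  have tsub : ∀ x y : A, tau (x - y) = tau x - tau y := by
    intro x y
    exact (IsLinearMap.mk' _ htau_lin).map_sub x y
  -- the four key identities
  have hff : kappa f f = f * tau f := by
    rw [hgval, hf]
    simp only [hk_leib, hk_leibr, ktt, ktP, kPt, hPP]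
    ring
  have hfg : kappa f (tau f) = tau f * tau f := by
    rw [hgval, hf]
    simp only [ksubr, hk_leib, hk_leibr, hk2l, hk2r, ktt, ktP, kPt, ktR, kRt, ktS, kSt,
      hPP, hRR, hSS, hPR, hRP, hPS, hSP, hRS, hSR, mul_zero, zero_mul, add_zero, zero_add]
    ring
  have htg : tau (tau f) = 0 := by
    rw [hgval, tsub]
    simp only [htau_prod, ht2, hP', hR', hS', htQi, hk2l, hk2r, hk_leib, hk_leibr,
      ksubr, ksubl, ktt, ktP, kPt, ktR, kRt, ktS, kSt,
      hPP, hRR, hSS, hPR, hRP, hPS, hSP, hRS, hSR, mul_zero, zero_mul, add_zero, zero_add]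
    linear_combination (-(4 : A) * P * ⅟Q) * invOf_mul_self Q
  have hgg : kappa (tau f) (tau f) = -(2 * (tau f * tau f)) := by
    rw [hgval]
    simp only [ksubr, ksubl, hk_leib, hk_leibr, hk2l, hk2r, ktt, ktP, kPt, ktR, kRt, ktS, kSt,
      hPP, hRR, hSS, hPR, hRP, hPS, hSP, hRS, hSR, mul_zero, zero_mul, add_zero, zero_add]
    linear_combination (-(8 : A) * P * R * S * (⅟Q * ⅟Q * ⅟Q)) * invOf_mul_self Q
  -- tau of powers of tau f
  have htyk : ∀ k : ℕ, tau (tau f ^ k) = -(2 * (k : A) * ((k : A) - 1)) * tau f ^ k := by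
    intro k
    cases k with
    | zero => rw [pow_zero, ht1]; push_cast; ring
    | succ j =>
        rw [taupow_y tau kappa hk_symm hk_leib htau_prod (tau f) htg hgg j]
        push_cast
        ring
  -- the key termwise formula
  have hTE : ∀ k : ℕ, k ≤ d →
      tau (f ^ (d - k) * tau f ^ k)
        = ((d : ℂ) ^ 2 - (k : ℂ) ^ 2) • (f ^ (d - (k + 1)) * tau f ^ (k + 1))
          - (2 * (k : ℂ) * ((k : ℂ) - 1)) • (f ^ (d - k) * tau f ^ k) := by
    intro k hk
    have e2 : (algebraMap ℂ A) (2 * (k : ℂ) * ((k : ℂ) - 1)) = 2 * (k : A) * ((k : A) - 1) := by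
      rw [map_mul, map_mul, map_sub, map_ofNat, map_natCast, map_one]
    rcases Nat.lt_or_ge k d with hlt | hge
    · obtain ⟨m, hm⟩ : ∃ m, d - k = m + 1 := ⟨d - k - 1, by omega⟩
      have hm2 : d - (k + 1) = m := by omega
      have hd2 : d = m + 1 + k := by omega
      have e1 : (algebraMap ℂ A) ((d : ℂ) ^ 2 - (k : ℂ) ^ 2)
          = ((m : A) + 1) ^ 2 + 2 * ((m : A) + 1) * (k : A) := by
        rw [map_sub, map_pow, map_pow, map_natCast, map_natCast, hd2]
        push_cast
        ring
      rw [hm, hm2,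
        main_pow tau kappa hk_symm hk_leib htau_prod hk1 f (tau f) rfl hff hfg m k,
        htyk k, Algebra.smul_def, Algebra.smul_def, e1, e2]
      ring
    · have hkd : k = d := le_antisymm hk hge
      subst hkd
      have h0 : k - k = 0 := by omega
      have h1 : k - (k + 1) = 0 := by omega
      rw [h0, h1, pow_zero, one_mul, one_mul, htyk k, Algebra.smul_def, Algebra.smul_def, e2,
        sub_self, map_zero]
      ring
  -- assemble the sum
  have hsum : tau (∑ k ∈ Finset.range (d + 1), c k • (f ^ (d - k) * tau f ^ k))
      = ∑ k ∈ Finset.range (d + 1), c k • tau (f ^ (d - k) * tau f ^ k) := by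
    rw [show tau (∑ k ∈ Finset.range (d + 1), c k • (f ^ (d - k) * tau f ^ k))
        = (IsLinearMap.mk' tau htau_lin) (∑ k ∈ Finset.range (d + 1),
            c k • (f ^ (d - k) * tau f ^ k)) from rfl,
      map_sum]
    refine Finset.sum_congr rfl fun k _ => ?_
    rw [map_smul]
    rfl
  rw [hsum]
  have hsum2 : ∑ k ∈ Finset.range (d + 1), c k • tau (f ^ (d - k) * tau f ^ k)
      = (∑ k ∈ Finset.range (d + 1),
          (c k * ((d : ℂ) ^ 2 - (k : ℂ) ^ 2)) • (f ^ (d - (k + 1)) * tau f ^ (k + 1)))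
        - ∑ k ∈ Finset.range (d + 1),
            (c k * (2 * (k : ℂ) * ((k : ℂ) - 1))) • (f ^ (d - k) * tau f ^ k) := by
    rw [← Finset.sum_sub_distrib]
    refine Finset.sum_congr rfl fun k hk => ?_
    have hkd : k ≤ d := by
      have := Finset.mem_range.mp hk; omega
    rw [hTE k hkd, smul_sub, smul_smul, smul_smul]
  rw [hsum2, sub_eq_zero]
  -- strip the vanishing extreme terms
  rw [Finset.sum_range_succ, Finset.sum_range_succ']
  have hlast : (c d * ((d : ℂ) ^ 2 - (d : ℂ) ^ 2)) • (f ^ (d - (d + 1)) * tau f ^ (d + 1))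
      = 0 := by
    rw [sub_self, mul_zero, zero_smul]
  have hfirst : (c 0 * (2 * ((0 : ℕ) : ℂ) * (((0 : ℕ) : ℂ) - 1))) • (f ^ (d - 0) * tau f ^ 0)
      = 0 := by
    push_cast
    rw [mul_zero, zero_mul, mul_zero, zero_smul]
  rw [hlast, add_zero, hfirst, add_zero]
  refine Finset.sum_congr rfl fun k hk => ?_
  have hkd : k < d := Finset.mem_range.mp hk
  congr 1
  rcases Nat.eq_zero_or_pos k with h0 | h1
  · subst h0
    rw [hc0]
    push_cast
    ring
  · have hrk := hrec k h1 (by omega)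
    push_cast
    linear_combination -hrk
end

section
/- For every positive integer d there exist coefficients c_0, c_1, …, c_d ∈ ℂ with c_0 = 1 such that the element Φ_d(f) = Σ_{k=0}^d c_k · f^{d−k} · τ(f)^k (with f = P·Q⁻¹) is biharmonic: τ(τ(Φ_d(f))) = 0. -/
noncomputable def bihC (d k : ℕ) : ℂ := ((d - k : ℕ) : ℂ) * ((d + k : ℕ) : ℂ)

noncomputable def bihE (k : ℕ) : ℂ := -2 * (k : ℂ) * ((k : ℂ) - 1)

noncomputable def bihT (d : ℕ) (a : ℕ → ℂ) : ℕ → ℂ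
  | 0 => 0
  | (k+1) => a k * bihC d k + a (k+1) * bihE (k+1)

noncomputable def bihB (d : ℕ) : ℕ → ℂ
  | 0 => 0
  | 1 => bihC d 0
  | (k+2) => bihB d (k+1) * bihC d (k+1) / (-bihE (k+2))

noncomputable def bihA (d : ℕ) : ℕ → ℂ
  | 0 => 1
  | 1 => 0
  | (k+2) => (bihA d (k+1) * bihC d (k+1) - bihB d (k+2)) / (-bihE (k+2))

lemma bihE_ne (k : ℕ) : bihE (k+2) ≠ 0 := by
  unfold bihE
  push_cast
  intro h
  have h2 : ((k:ℂ)+2) * ((k:ℂ)+1) = 0 := by linear_combination -h/2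
  rcases mul_eq_zero.mp h2 with h3 | h3
  · have h4 : ((k+2:ℕ):ℂ) = 0 := by push_cast; linear_combination h3
    exact absurd (Nat.cast_eq_zero.mp h4) (by omega)
  · have h4 : ((k+1:ℕ):ℂ) = 0 := by push_cast; linear_combination h3
    exact absurd (Nat.cast_eq_zero.mp h4) (by omega)

lemma bihB_spec (d k : ℕ) : bihT d (bihB d) k = 0 := by
  match k with
  | 0 => rfl
  | 1 =>
    show bihB d 0 * bihC d 0 + bihB d 1 * bihE 1 = 0
    have h1 : bihE 1 = 0 := by norm_num [bihE]
    simp [bihB, h1]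
  | (j+2) =>
    show bihB d (j+1) * bihC d (j+1) + bihB d (j+2) * bihE (j+2) = 0
    have hE := bihE_ne j
    rw [show bihB d (j+2) = bihB d (j+1) * bihC d (j+1) / (-bihE (j+2)) from rfl]
    rw [div_neg, neg_mul, div_mul_eq_mul_div, mul_div_assoc, div_self hE, mul_one]
    ring

lemma bihA_spec (d k : ℕ) : bihT d (bihA d) k = bihB d k := by
  match k with
  | 0 => rfl
  | 1 =>
    show bihA d 0 * bihC d 0 + bihA d 1 * bihE 1 = bihB d 1
    have h1 : bihE 1 = 0 := by norm_num [bihE]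
    simp [bihA, h1, bihB]
  | (j+2) =>
    show bihA d (j+1) * bihC d (j+1) + bihA d (j+2) * bihE (j+2) = bihB d (j+2)
    have hE := bihE_ne j
    rw [show bihA d (j+2) = (bihA d (j+1) * bihC d (j+1) - bihB d (j+2)) / (-bihE (j+2)) from rfl]
    rw [div_neg, neg_mul, div_mul_eq_mul_div, mul_div_assoc, div_self hE, mul_one]
    ring

/-- Theorem 5.5: for every positive integer `d` there are coefficients
`c₀ = 1, c₁, …, c_d ∈ ℂ` such that `Φ_d(f) = Σ_{k=0}^d c_k f^{d-k} τ(f)^k` is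
biharmonic. -/
theorem stmt_7 {A : Type*} [CommRing A] [Algebra ℂ A]
    (tau : A → A) (kappa : A → A → A)
    (htau_lin : IsLinearMap ℂ tau)
    (hk_symm : ∀ f g : A, kappa f g = kappa g f)
    (hk_lin : ∀ f : A, IsLinearMap ℂ (kappa f))
    (hk_leib : ∀ f g h : A, kappa (f * g) h = f * kappa g h + g * kappa f h)
    (htau_prod : ∀ f g : A, tau (f * g) = tau f * g + 2 * kappa f g + f * tau g)
    (lam : ℂ) (P Q R S : A) [Invertible Q]
    (hP : tau P = lam • P) (hQ : tau Q = lam • Q)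
    (hR : tau R = lam • R) (hS : tau S = lam • S)
    (hPP : kappa P P = -(P * P)) (hQQ : kappa Q Q = -(Q * Q))
    (hRR : kappa R R = -(R * R)) (hSS : kappa S S = -(S * S))
    (hPQ : kappa P Q = -(R * S)) (hRS : kappa R S = -(P * Q))
    (hPR : kappa P R = -(P * R)) (hPS : kappa P S = -(P * S))
    (hQR : kappa Q R = -(Q * R)) (hQS : kappa Q S = -(Q * S))
    (f : A) (hf : f = P * ⅟Q)
    (d : ℕ) (hd : 0 < d) :
    ∃ c : ℕ → ℂ, c 0 = 1 ∧
      tau (tau (∑ k ∈ Finset.range (d + 1), c k • (f ^ (d - k) * tau f ^ k))) = 0 := by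
  subst hf
  set iQ := (⅟Q : A) with hiQdef
  have hQiQ : Q * iQ = 1 := mul_invOf_self Q
  have hP' : tau P = algebraMap ℂ A lam * P := by rw [hP, Algebra.smul_def]
  have hQ' : tau Q = algebraMap ℂ A lam * Q := by rw [hQ, Algebra.smul_def]
  have hR' : tau R = algebraMap ℂ A lam * R := by rw [hR, Algebra.smul_def]
  have hS' : tau S = algebraMap ℂ A lam * S := by rw [hS, Algebra.smul_def]
  -- basics
  have k1 : ∀ x : A, kappa 1 x = 0 := by
    intro x
    have h := hk_leib 1 1 x
    simp only [one_mul] at h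
    linear_combination -h
  have tau1 : tau 1 = 0 := by
    have h := htau_prod 1 1
    simp only [one_mul, mul_one, k1] at h
    linear_combination -h
  have kmul' : ∀ x y z : A, kappa x (y * z) = y * kappa x z + z * kappa x y := by
    intro x y z
    rw [hk_symm, hk_leib, hk_symm z x, hk_symm y x]
  have k_sub : ∀ x y z : A, kappa x (y - z) = kappa x y - kappa x z :=
    fun x y z => (hk_lin x).map_sub y z
  have two_smul' : ∀ y : A, (2:A) * y = (2:ℂ) • y := fun y => by
    rw [Algebra.smul_def, map_ofNat]
  have k2 : ∀ x y : A, kappa x (2 * y) = 2 * kappa x y := fun x y => by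
    rw [two_smul' y, (hk_lin x).map_smul, ← two_smul']
  have tau2 : ∀ y : A, tau (2 * y) = 2 * tau y := fun y => by
    rw [two_smul' y, htau_lin.map_smul, ← two_smul']
  have tau_sub : ∀ x y : A, tau (x - y) = tau x - tau y :=
    fun x y => htau_lin.map_sub x y
  have tau_sum : ∀ (n : ℕ) (F : ℕ → A),
      tau (∑ k ∈ Finset.range n, F k) = ∑ k ∈ Finset.range n, tau (F k) :=
    fun n F => map_sum (IsLinearMap.mk' tau htau_lin) F (Finset.range n)
  -- kappa atoms
  have kiQ : ∀ x : A, kappa iQ x = -(iQ*iQ) * kappa Q x := by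
    intro x
    have h0 : kappa (Q * iQ) x = 0 := by rw [hQiQ]; exact k1 x
    rw [hk_leib] at h0
    linear_combination iQ * h0 - kappa iQ x * hQiQ
  have kiQP : kappa iQ P = R*S*(iQ*iQ) := by
    rw [kiQ, hk_symm Q P, hPQ]; ring
  have kPiQ : kappa P iQ = R*S*(iQ*iQ) := by rw [hk_symm]; exact kiQP
  have kiQR : kappa iQ R = R * iQ := by
    rw [kiQ, hQR]; linear_combination (R*iQ) * hQiQ
  have kRiQ : kappa R iQ = R * iQ := by rw [hk_symm]; exact kiQR
  have kiQS : kappa iQ S = S * iQ := by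
    rw [kiQ, hQS]; linear_combination (S*iQ) * hQiQ
  have kSiQ : kappa S iQ = S * iQ := by rw [hk_symm]; exact kiQS
  have kiQQ : kappa iQ Q = 1 := by
    rw [kiQ, hQQ]; linear_combination (Q*iQ + 1) * hQiQ
  have kQiQ : kappa Q iQ = 1 := by rw [hk_symm]; exact kiQQ
  have kiQiQ : kappa iQ iQ = -(iQ*iQ) := by
    rw [kiQ, kQiQ]; ring
  have kRP : kappa R P = -(P*R) := by rw [hk_symm]; exact hPR
  have kSP : kappa S P = -(P*S) := by rw [hk_symm]; exact hPS
  have kSR : kappa S R = -(P*Q) := by rw [hk_symm]; exact hRS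
  -- tau iQ
  have tau_iQ : tau iQ = -((algebraMap ℂ A lam + 2) * iQ) := by
    have h := htau_prod Q iQ
    rw [hQiQ, tau1, hQ', kQiQ] at h
    linear_combination (-iQ) * h - (tau iQ + algebraMap ℂ A lam * iQ) * hQiQ
  -- tau f and tau e
  have htf : tau (P * iQ) = 2*(R*S*(iQ*iQ)) - 2*(P*iQ) := by
    have h := htau_prod P iQ
    rw [hP', kPiQ, tau_iQ] at h
    rw [h]; ring
  have hte : tau (R*S*(iQ*iQ)) = 2*(R*S*(iQ*iQ)) - 2*(P*iQ) := by
    simp only [htau_prod, hk_leib, kmul', hR', hS', tau_iQ, hRS, kRiQ, kSiQ,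
      kiQiQ, kiQR, kiQS, kSR]
    linear_combination (-2*P*iQ) * hQiQ
  have kff : kappa (P*iQ) (P*iQ)
      = 2*((P*iQ)*(R*S*(iQ*iQ))) - 2*((P*iQ)*(P*iQ)) := by
    simp only [hk_leib, kmul', hPP, kPiQ, kiQP, kiQiQ]
    ring
  have kfe : kappa (P*iQ) (R*S*(iQ*iQ))
      = 2*((R*S*(iQ*iQ))*(R*S*(iQ*iQ))) - 2*((P*iQ)*(R*S*(iQ*iQ))) := by
    simp only [hk_leib, kmul', hPR, hPS, kPiQ, kiQR, kiQS, kiQiQ, kiQP]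
    ring
  have kee : kappa (R*S*(iQ*iQ)) (R*S*(iQ*iQ))
      = 2*((R*S*(iQ*iQ))*(R*S*(iQ*iQ))) - 2*((P*iQ)*(R*S*(iQ*iQ))) := by
    simp only [hk_leib, kmul', hRR, hSS, hRS, kSR, kRiQ, kSiQ, kiQiQ, kiQR, kiQS]
    linear_combination (-2*P*R*S*(iQ*iQ*iQ)) * hQiQ
  set g := tau (P * iQ) with hgdef
  have htg : tau g = 0 := by
    rw [htf, tau_sub, tau2, tau2, hte, ← hgdef, htf]; ring
  have kfg : kappa (P*iQ) g = g * g := by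
    rw [htf, k_sub, k2, k2, kfe, kff]; ring
  have kgg : kappa g g = -2 * (g * g) := by
    have e1 : kappa (R*S*(iQ*iQ)) (P*iQ)
        = 2*((R*S*(iQ*iQ))*(R*S*(iQ*iQ))) - 2*((P*iQ)*(R*S*(iQ*iQ))) := by
      rw [hk_symm]; exact kfe
    rw [htf]
    simp only [k_sub, k2]
    rw [hk_symm (2*(R*S*(iQ*iQ)) - 2*(P*iQ)) (R*S*(iQ*iQ)),
        hk_symm (2*(R*S*(iQ*iQ)) - 2*(P*iQ)) (P*iQ)]
    simp only [k_sub, k2, kee, kfe, kff, e1]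
    ring
  have kffg : kappa (P*iQ) (P*iQ) = (P*iQ) * g := by rw [kff, htf]; ring
  -- power lemmas
  have kapow : ∀ (y x : A) (n : ℕ),
      kappa y (x^(n+1)) = ((n:A)+1) * (x^n * kappa y x) := by
    intro y x n
    induction n with
    | zero => simp
    | succ n ih =>
      rw [pow_succ, kmul', ih]
      push_cast
      ring
  have taupow : ∀ (x w : A), kappa x x = x * w → ∀ n : ℕ,
      tau (x^(n+1)) = ((n:A)+1) * (x^n * tau x) + (((n:A)+1)*(n:A)) * (x^n * w) := by
    intro x w hw n
    induction n with
    | zero => simp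
    | succ n ih =>
      rw [pow_succ, htau_prod, ih, hk_symm (x^(n+1)) x, kapow x x n, hw]
      push_cast
      ring
  have tauF : ∀ m : ℕ,
      tau ((P*iQ)^(m+1)) = (((m:A)+1)*((m:A)+1)) * ((P*iQ)^m * g) := by
    intro m
    rw [taupow (P*iQ) g kffg m, ← hgdef]
    ring
  have tauG : ∀ n : ℕ, tau (g^(n+1)) = (-2*((n:A)+1)*(n:A)) * g^(n+1) := by
    intro n
    rw [taupow g (-2*g) (by rw [kgg]; ring) n, htg]
    ring
  have kFG : ∀ m n : ℕ, kappa ((P*iQ)^(m+1)) (g^(n+1))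
      = (((m:A)+1)*((n:A)+1)) * ((P*iQ)^m * g^(n+2)) := by
    intro m n
    rw [kapow ((P*iQ)^(m+1)) g n, hk_symm ((P*iQ)^(m+1)) g, kapow g (P*iQ) m,
        hk_symm g (P*iQ), kfg]
    ring
  have CORE : ∀ m n : ℕ, tau ((P*iQ)^(m+1) * g^(n+1))
      = (((m:A)+1)*((m:A)+2*(n:A)+3)) * ((P*iQ)^m * g^(n+2))
        + (-2*((n:A)+1)*(n:A)) * ((P*iQ)^(m+1) * g^(n+1)) := by
    intro m n
    rw [htau_prod, tauF m, tauG n, kFG m n]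
    ring
  -- bridging lemmas for coefficients
  have albihC : ∀ a b : ℕ, algebraMap ℂ A (bihC a b)
      = ((a - b : ℕ) : A) * ((a + b : ℕ) : A) := by
    intro a b
    simp [bihC, map_mul]
  have albihE : ∀ k : ℕ, algebraMap ℂ A (bihE k) = -2 * (k:A) * ((k:A) - 1) := by
    intro k
    simp [bihE, map_mul, map_sub, map_neg, map_ofNat]
  -- the main per-term formula
  have TU : ∀ k ∈ Finset.range (d+1),
      tau ((P*iQ)^(d-k) * g^k)
        = bihC d k • ((P*iQ)^(d-(k+1)) * g^(k+1)) + bihE k • ((P*iQ)^(d-k) * g^k) := by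
    intro k hk
    have hkd : k ≤ d := by have := Finset.mem_range.mp hk; omega
    rw [Algebra.smul_def, Algebra.smul_def]
    rcases k with _ | j
    · obtain ⟨m, rfl⟩ : ∃ m, d = m + 1 := ⟨d - 1, by omega⟩
      simp only [Nat.sub_zero, pow_zero, mul_one, Nat.add_sub_cancel, pow_one]
      rw [tauF m, albihC, albihE]
      simp only [Nat.sub_zero, Nat.add_zero, Nat.add_sub_cancel]
      push_cast
      ring
    · rcases eq_or_lt_of_le hkd with heq | hlt
      · -- j + 1 = d
        subst heq
        rw [Nat.sub_self, show j+1-(j+1+1) = 0 from by omega]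
        simp only [pow_zero, one_mul]
        rw [tauG j, albihE]
        rw [show bihC (j+1) (j+1) = 0 from by simp [bihC], map_zero]
        push_cast
        ring
      · -- j + 1 < d
        obtain ⟨m, rfl⟩ : ∃ m, d = m + (j+2) := ⟨d - (j+2), by omega⟩
        rw [show m + (j+2) - (j+1) = m+1 from by omega,
            show m + (j+2) - (j+1+1) = m from by omega]
        rw [CORE m j, albihC, albihE]
        rw [show m + (j+2) - (j+1) = m+1 from by omega]
        push_cast
        ring
  -- the summation step
  have STEP : ∀ a : ℕ → ℂ,
      tau (∑ k ∈ Finset.range (d+1), a k • ((P*iQ)^(d-k) * g^k))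
        = ∑ k ∈ Finset.range (d+1), bihT d a k • ((P*iQ)^(d-k) * g^k) := by
    intro a
    rw [tau_sum (d+1) (fun k => a k • ((P*iQ)^(d-k) * g^k))]
    have h1 : ∑ k ∈ Finset.range (d+1), tau (a k • ((P*iQ)^(d-k) * g^k))
        = ∑ k ∈ Finset.range (d+1),
            ((a k * bihC d k) • ((P*iQ)^(d-(k+1)) * g^(k+1))
              + (a k * bihE k) • ((P*iQ)^(d-k) * g^k)) := by
      refine Finset.sum_congr rfl fun k hk => ?_
      rw [htau_lin.map_smul, TU k hk, smul_add, smul_smul, smul_smul]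
    rw [h1, Finset.sum_add_distrib,
        Finset.sum_range_succ (fun k => (a k * bihC d k) • ((P*iQ)^(d-(k+1)) * g^(k+1))),
        Finset.sum_range_succ' (fun k => (a k * bihE k) • ((P*iQ)^(d-k) * g^k)),
        Finset.sum_range_succ' (fun k => bihT d a k • ((P*iQ)^(d-k) * g^k))]
    rw [show bihC d d = 0 from by simp [bihC], show bihE 0 = 0 from by norm_num [bihE],
        show bihT d a 0 = 0 from rfl]
    simp only [mul_zero, zero_smul, add_zero]
    rw [← Finset.sum_add_distrib]
    refine Finset.sum_congr rfl fun k hk => ?_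
    rw [← add_smul]
    rfl
  refine ⟨bihA d, rfl, ?_⟩
  rw [STEP (bihA d), show bihT d (bihA d) = bihB d from funext (bihA_spec d),
      STEP (bihB d)]
  exact Finset.sum_eq_zero fun k _ => by rw [bihB_spec d k, zero_smul]
end

section
/- For all positive integers m, ℓ and all i, j ∈ {1,…,N} the elements f_j = P_j·Q⁻¹ satisfy: (1) 2·κ(f_i^m, f_j^ℓ) = m·ℓ·f_i^{m−1}·f_j^{ℓ−1}·(f_i·τ(f_j) + τ(f_i)·f_j); (2) κ(f_i^m, τ(f_j)^ℓ) = m·ℓ·f_i^{m−1}·τ(f_i)·τ(f_j)^ℓ; (3) κ(τ(f_i)^m, τ(f_j)^ℓ) = 2μ·m·ℓ·τ(f_i)^m·τ(f_j)^ℓ; (4) τ(f_i^m) = m²·f_i^{m−1}·τ(f_i); (5) τ(τ(f_i)^m) = 2μ·m·(m−1)·τ(f_i)^m. -/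
/-- Lemma 7.2: under the conditions (PP-QQ) the quotients `f_j = P_j·Q⁻¹` satisfy,
for all positive integers `m, ℓ` and all `i, j`:
(1) `2κ(f_i^m, f_j^ℓ) = mℓ·f_i^{m-1}·f_j^{ℓ-1}·(f_i·τ(f_j) + τ(f_i)·f_j)`,
(2) `κ(f_i^m, τ(f_j)^ℓ) = mℓ·f_i^{m-1}·τ(f_i)·τ(f_j)^ℓ`,
(3) `κ(τ(f_i)^m, τ(f_j)^ℓ) = 2μmℓ·τ(f_i)^m·τ(f_j)^ℓ`,
(4) `τ(f_i^m) = m²·f_i^{m-1}·τ(f_i)`,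
(5) `τ(τ(f_i)^m) = 2μm(m-1)·τ(f_i)^m`. -/
theorem stmt_9 {A : Type*} [CommRing A] [Algebra ℂ A]
    (tau : A → A) (kappa : A → A → A)
    (htau_lin : IsLinearMap ℂ tau)
    (hk_symm : ∀ f g : A, kappa f g = kappa g f)
    (hk_lin : ∀ f : A, IsLinearMap ℂ (kappa f))
    (hk_leib : ∀ f g h : A, kappa (f * g) h = f * kappa g h + g * kappa f h)
    (htau_prod : ∀ f g : A, tau (f * g) = tau f * g + 2 * kappa f g + f * tau g)
    (lam mu : ℂ) (N : ℕ) (hN : 0 < N)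
    (P S : Fin N → A) (Q R : A) [Invertible Q]
    (hP : ∀ j, tau (P j) = lam • P j) (hQ : tau Q = lam • Q)
    (hR : tau R = lam • R) (hS : ∀ j, tau (S j) = lam • S j)
    (hPP : ∀ j k, kappa (P j) (P k) = mu • (P j * P k))
    (hSS : ∀ j k, kappa (S j) (S k) = mu • (S j * S k))
    (hQQ : kappa Q Q = mu • (Q * Q))
    (hRR : kappa R R = mu • (R * R))
    (hQR : kappa Q R = mu • (Q * R))
    (hQS : ∀ j, kappa Q (S j) = mu • (Q * S j))
    (hPR : ∀ j, kappa (P j) R = mu • (P j * R))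
    (hPS : ∀ j k, kappa (P j) (S k) = mu • (P k * S j))
    (hPQ : ∀ j, kappa (P j) Q = mu • (R * S j))
    (hRS : ∀ j, kappa R (S j) = mu • (P j * Q))
    (f : Fin N → A) (hf : ∀ j, f j = P j * ⅟Q)
    (m ℓ : ℕ) (hm : 0 < m) (hℓ : 0 < ℓ) (i j : Fin N) :
    2 * kappa (f i ^ m) (f j ^ ℓ) =
      ((m : ℂ) * ℓ) • (f i ^ (m - 1) * f j ^ (ℓ - 1) * (f i * tau (f j) + tau (f i) * f j)) ∧
    kappa (f i ^ m) (tau (f j) ^ ℓ) =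
      ((m : ℂ) * ℓ) • (f i ^ (m - 1) * tau (f i) * tau (f j) ^ ℓ) ∧
    kappa (tau (f i) ^ m) (tau (f j) ^ ℓ) =
      (2 * mu * m * ℓ) • (tau (f i) ^ m * tau (f j) ^ ℓ) ∧
    tau (f i ^ m) = ((m : ℂ) ^ 2) • (f i ^ (m - 1) * tau (f i)) ∧
    tau (tau (f i) ^ m) = (2 * mu * m * ((m : ℂ) - 1)) • (tau (f i) ^ m) := by
  have hu : ⅟Q * Q = 1 := invOf_mul_self Q
  -- basic consequences
  have k_one : ∀ h : A, kappa 1 h = 0 := by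
    intro h
    have H := hk_leib 1 1 h
    simp only [one_mul] at H
    linear_combination -H
  have k_one' : ∀ h : A, kappa h 1 = 0 := fun h => (hk_symm h 1).trans (k_one h)
  have tau_one : tau (1 : A) = 0 := by
    have H := htau_prod 1 1
    simp only [one_mul, mul_one] at H
    linear_combination -H - 2 * k_one 1
  have kappa_sub : ∀ a x y : A, kappa a (x - y) = kappa a x - kappa a y := by
    intro a x y
    have h2 := (hk_lin a).map_smul (-1 : ℂ) y
    rw [neg_one_smul, neg_one_smul] at h2
    rw [sub_eq_add_neg, (hk_lin a).map_add, h2, ← sub_eq_add_neg]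
  have kappa_sub' : ∀ a x y : A, kappa (x - y) a = kappa x a - kappa y a := by
    intro a x y
    rw [hk_symm (x - y) a, kappa_sub a x y, hk_symm a x, hk_symm a y]
  have tau_sub : ∀ x y : A, tau (x - y) = tau x - tau y := by
    intro x y
    have h2 := htau_lin.map_smul (-1 : ℂ) y
    rw [neg_one_smul, neg_one_smul] at h2
    rw [sub_eq_add_neg, htau_lin.map_add, h2, ← sub_eq_add_neg]
  have kappa_alg : ∀ (h : A) (c : ℂ), kappa h ((algebraMap ℂ A) c) = 0 := by
    intro h c
    rw [Algebra.algebraMap_eq_smul_one, (hk_lin h).map_smul, k_one' h, smul_zero]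
  have kappa_alg' : ∀ (h : A) (c : ℂ), kappa ((algebraMap ℂ A) c) h = 0 := by
    intro h c
    rw [hk_symm]; exact kappa_alg h c
  have kappa_two : ∀ h : A, kappa h (2 : A) = 0 := by
    intro h
    have := kappa_alg h 2
    rwa [map_ofNat] at this
  have kappa_two' : ∀ h : A, kappa (2 : A) h = 0 := by
    intro h
    rw [hk_symm]; exact kappa_two h
  have tau_alg : ∀ c : ℂ, tau ((algebraMap ℂ A) c) = 0 := by
    intro c
    rw [Algebra.algebraMap_eq_smul_one, htau_lin.map_smul, tau_one, smul_zero]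
  have tau_two : tau (2 : A) = 0 := by
    have := tau_alg 2
    rwa [map_ofNat] at this
  have kmul_right : ∀ a b c : A, kappa a (b * c) = b * kappa a c + c * kappa a b := by
    intro a b c
    rw [hk_symm a (b * c), hk_leib, hk_symm c a, hk_symm b a]
  have ku : ∀ h : A, kappa ⅟Q h = -(⅟Q * ⅟Q * kappa Q h) := by
    intro h
    have H := hk_leib ⅟Q Q h
    rw [hu, k_one h] at H
    linear_combination (-⅟Q) * H - kappa ⅟Q h * hu
  -- symmetric versions of given values
  have vRQ : kappa R Q = mu • (Q * R) := (hk_symm R Q).trans hQR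
  have vSQ : ∀ a, kappa (S a) Q = mu • (Q * S a) := fun a => (hk_symm (S a) Q).trans (hQS a)
  have vRP : ∀ a, kappa R (P a) = mu • (P a * R) := fun a => (hk_symm R (P a)).trans (hPR a)
  have vSP : ∀ a b, kappa (S a) (P b) = mu • (P a * S b) :=
    fun a b => (hk_symm (S a) (P b)).trans (hPS b a)
  have vQP : ∀ a, kappa Q (P a) = mu • (R * S a) := fun a => (hk_symm Q (P a)).trans (hPQ a)
  have vSR : ∀ a, kappa (S a) R = mu • (P a * Q) := fun a => (hk_symm (S a) R).trans (hRS a)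
  -- values involving ⅟Q
  have vuQ : kappa ⅟Q Q = -(algebraMap ℂ A mu) := by
    have h1 := ku Q
    rw [hQQ, Algebra.smul_def] at h1
    linear_combination h1 - (algebraMap ℂ A mu * (⅟Q * Q + 1)) * hu
  have vQu : kappa Q ⅟Q = -(algebraMap ℂ A mu) := (hk_symm Q ⅟Q).trans vuQ
  have vuR : kappa ⅟Q R = -(algebraMap ℂ A mu * (⅟Q * R)) := by
    have h1 := ku R
    rw [hQR, Algebra.smul_def] at h1
    linear_combination h1 - (algebraMap ℂ A mu * ⅟Q * R) * hu
  have vRu : kappa R ⅟Q = -(algebraMap ℂ A mu * (⅟Q * R)) := (hk_symm R ⅟Q).trans vuR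
  have vuS : ∀ a, kappa ⅟Q (S a) = -(algebraMap ℂ A mu * (⅟Q * S a)) := by
    intro a
    have h1 := ku (S a)
    rw [hQS a, Algebra.smul_def] at h1
    linear_combination h1 - (algebraMap ℂ A mu * ⅟Q * S a) * hu
  have vSu : ∀ a, kappa (S a) ⅟Q = -(algebraMap ℂ A mu * (⅟Q * S a)) :=
    fun a => (hk_symm (S a) ⅟Q).trans (vuS a)
  have vuP : ∀ a, kappa ⅟Q (P a) = -(algebraMap ℂ A mu * (⅟Q * ⅟Q * (R * S a))) := by
    intro a
    have h1 := ku (P a)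
    rw [hk_symm Q (P a), hPQ a, Algebra.smul_def] at h1
    linear_combination h1
  have vPu : ∀ a, kappa (P a) ⅟Q = -(algebraMap ℂ A mu * (⅟Q * ⅟Q * (R * S a))) :=
    fun a => (hk_symm (P a) ⅟Q).trans (vuP a)
  have vuu : kappa ⅟Q ⅟Q = algebraMap ℂ A mu * (⅟Q * ⅟Q) := by
    have h1 := ku ⅟Q
    rw [vQu] at h1
    linear_combination h1
  -- tau of the inverse
  have tu : tau ⅟Q = (2 * algebraMap ℂ A mu - algebraMap ℂ A lam) * ⅟Q := by
    have H := htau_prod Q ⅟Q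
    rw [mul_invOf_self, tau_one, hQ, vQu, Algebra.smul_def] at H
    linear_combination (-⅟Q) * H - (tau ⅟Q + algebraMap ℂ A lam * ⅟Q) * hu
  -- closed form of tau (f a)
  have hTf : ∀ a, tau (f a) =
      2 * algebraMap ℂ A mu * (P a * ⅟Q - R * S a * (⅟Q * ⅟Q)) := by
    intro a
    rw [hf a, htau_prod, hP a, tu, vPu a, Algebra.smul_def]
    ring
  -- base identities
  have B1g : ∀ a b, 2 * kappa (f a) (f b) = f a * tau (f b) + tau (f a) * f b := by
    intro a b
    rw [hTf a, hTf b, hf a, hf b]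
    simp only [hk_leib, kmul_right, hPP, hSS, hQQ, hRR, hQR, hQS, hPR, hPS, hPQ, hRS,
      vRQ, vSQ, vRP, vSP, vQP, vSR, vuQ, vQu, vuR, vRu, vuS, vSu, vuP, vPu, vuu,
      Algebra.smul_def]
    ring
  have B2g : ∀ a b, kappa (f a) (tau (f b)) = tau (f a) * tau (f b) := by
    intro a b
    rw [hTf b, hTf a, hf a]
    simp only [hk_leib, kmul_right, kappa_sub, kappa_sub', kappa_two, kappa_two',
      kappa_alg, kappa_alg', hPP, hSS, hQQ, hRR, hQR, hQS, hPR, hPS, hPQ, hRS,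
      vRQ, vSQ, vRP, vSP, vQP, vSR, vuQ, vQu, vuR, vRu, vuS, vSu, vuP, vPu, vuu,
      Algebra.smul_def]
    ring
  have B3g : ∀ a b, kappa (tau (f a)) (tau (f b)) =
      2 * algebraMap ℂ A mu * (tau (f a) * tau (f b)) := by
    intro a b
    rw [hTf a, hTf b]
    simp only [hk_leib, kmul_right, kappa_sub, kappa_sub', kappa_two, kappa_two',
      kappa_alg, kappa_alg', hPP, hSS, hQQ, hRR, hQR, hQS, hPR, hPS, hPQ, hRS,
      vRQ, vSQ, vRP, vSP, vQP, vSR, vuQ, vQu, vuR, vRu, vuS, vSu, vuP, vPu, vuu,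
      Algebra.smul_def]
    linear_combination (4 * algebraMap ℂ A mu ^ 3 * ⅟Q ^ 3 *
      (P b * R * S a + P a * R * S b)) * hu
  have B5g : ∀ a, tau (tau (f a)) = 0 := by
    intro a
    rw [hTf a]
    simp only [htau_prod, tau_sub, tau_two, tau_alg, hk_leib, kmul_right,
      kappa_sub, kappa_sub', kappa_two, kappa_two', kappa_alg, kappa_alg',
      hP, hQ, hR, hS, tu, hPP, hSS, hQQ, hRR, hQR, hQS, hPR, hPS, hPQ, hRS,
      vRQ, vSQ, vRP, vSP, vQP, vSR, vuQ, vQu, vuR, vRu, vuS, vSu, vuP, vPu, vuu,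
      Algebra.smul_def]
    linear_combination (-(4 * algebraMap ℂ A mu ^ 2 * (P a * ⅟Q))) * hu
  -- doubling cancellation
  have twoCancel : ∀ z w : A, 2 * z = 2 * w → z = w := by
    intro z w h
    have h2 : (2 : ℂ) • z = (2 : ℂ) • w := by
      rw [two_smul, two_smul, ← two_mul, ← two_mul, h]
    calc z = ((1/2 : ℂ) * 2) • z := by norm_num
      _ = (1/2 : ℂ) • ((2 : ℂ) • z) := by rw [mul_smul]
      _ = (1/2 : ℂ) • ((2 : ℂ) • w) := by rw [h2]
      _ = ((1/2 : ℂ) * 2) • w := by rw [mul_smul]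
      _ = w := by norm_num
  have Bself : kappa (f i) (f i) = f i * tau (f i) := by
    apply twoCancel
    linear_combination B1g i i
  -- general power rules for kappa
  have genK : ∀ (a b : A) (n : ℕ), 1 ≤ n →
      kappa a (b ^ n) = (n : ℂ) • (b ^ (n - 1) * kappa a b) := by
    intro a b n hn
    induction n, hn using Nat.le_induction with
    | base => simp
    | succ n hn ih =>
      obtain ⟨k, rfl⟩ : ∃ k, n = k + 1 := ⟨n - 1, by omega⟩
      rw [pow_succ, kmul_right, ih]
      simp only [Nat.add_sub_cancel]
      simp only [Algebra.smul_def]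
      push_cast
      try simp only [map_add, map_one, map_mul, map_pow, map_ofNat]
      ring
  have genK2 : ∀ (a b : A) (mm ll : ℕ), 1 ≤ mm → 1 ≤ ll →
      kappa (a ^ mm) (b ^ ll) =
        ((mm : ℂ) * ll) • (a ^ (mm - 1) * b ^ (ll - 1) * kappa a b) := by
    intro a b mm ll hmm hll
    rw [genK (a ^ mm) b ll hll, hk_symm (a ^ mm) b, genK b a mm hmm, hk_symm b a]
    simp only [Algebra.smul_def, map_mul]
    ring
  have hpow : ∀ (x : A) (n : ℕ), 0 < n → x ^ (n - 1) * x = x ^ n := by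
    intro x n hn
    obtain ⟨k, rfl⟩ : ∃ k, n = k + 1 := ⟨n - 1, by omega⟩
    simp [pow_succ]
  refine ⟨?_, ?_, ?_, ?_, ?_⟩
  · rw [genK2 (f i) (f j) m ℓ hm hℓ]
    simp only [Algebra.smul_def, map_mul]
    linear_combination (algebraMap ℂ A (m : ℂ) * algebraMap ℂ A (ℓ : ℂ) *
      f i ^ (m - 1) * f j ^ (ℓ - 1)) * B1g i j
  · rw [genK2 (f i) (tau (f j)) m ℓ hm hℓ]
    simp only [Algebra.smul_def, map_mul]
    linear_combination (algebraMap ℂ A (m : ℂ) * algebraMap ℂ A (ℓ : ℂ) *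
        f i ^ (m - 1) * tau (f j) ^ (ℓ - 1)) * B2g i j +
      (algebraMap ℂ A (m : ℂ) * algebraMap ℂ A (ℓ : ℂ) *
        f i ^ (m - 1) * tau (f i)) * hpow (tau (f j)) ℓ hℓ
  · rw [genK2 (tau (f i)) (tau (f j)) m ℓ hm hℓ]
    simp only [Algebra.smul_def, map_mul, map_ofNat]
    linear_combination (algebraMap ℂ A (m : ℂ) * algebraMap ℂ A (ℓ : ℂ) *
        tau (f i) ^ (m - 1) * tau (f j) ^ (ℓ - 1)) * B3g i j +
      (2 * algebraMap ℂ A mu * algebraMap ℂ A (m : ℂ) * algebraMap ℂ A (ℓ : ℂ) *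
        (tau (f j) ^ (ℓ - 1) * tau (f j))) * hpow (tau (f i)) m hm +
      (2 * algebraMap ℂ A mu * algebraMap ℂ A (m : ℂ) * algebraMap ℂ A (ℓ : ℂ) *
        tau (f i) ^ m) * hpow (tau (f j)) ℓ hℓ
  · have T4 : ∀ n : ℕ, tau (f i ^ (n + 1)) =
        (((n + 1 : ℕ) : ℂ) ^ 2) • (f i ^ n * tau (f i)) := by
      intro n
      induction n with
      | zero => simp
      | succ n ih =>
        rw [pow_succ, htau_prod, ih, hk_symm (f i ^ (n + 1)) (f i),
          genK (f i) (f i) (n + 1) (by omega)]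
        simp only [Nat.add_sub_cancel]
        rw [Bself]
        simp only [Algebra.smul_def]
        push_cast
        try simp only [map_add, map_one, map_pow, map_mul, map_ofNat]
        ring
    obtain ⟨m', rfl⟩ : ∃ k, m = k + 1 := ⟨m - 1, by omega⟩
    simp only [Nat.add_sub_cancel]
    exact T4 m'
  · have T5a : ∀ n : ℕ, tau (tau (f i) ^ (n + 1)) =
        (2 * mu * ((n + 1 : ℕ) : ℂ) * (((n + 1 : ℕ) : ℂ) - 1)) • (tau (f i) ^ (n + 1)) := by
      intro n
      induction n with
      | zero => simp [B5g i]
      | succ n ih =>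
        rw [pow_succ, htau_prod, ih, B5g i, hk_symm (tau (f i) ^ (n + 1)) (tau (f i)),
          genK (tau (f i)) (tau (f i)) (n + 1) (by omega)]
        simp only [Nat.add_sub_cancel]
        rw [B3g i i]
        simp only [Algebra.smul_def]
        push_cast
        try simp only [map_add, map_one, map_mul, map_pow, map_sub, map_ofNat]
        ring
    obtain ⟨m', rfl⟩ : ∃ k, m = k + 1 := ⟨m - 1, by omega⟩
    exact T5a m'
end

section
/- For every q in the quaternionic unitary group Sp(n), every row index 1 ≤ j ≤ n and every column index 1 ≤ c ≤ 2n: Σ_{Z∈B} (q·Z·Z)_{j,c} = −((2n+1)/2)·q_{j,c}; moreover for all 1 ≤ j, k, α, β ≤ n: Σ_{Z∈B} (q·Z)_{j,α}·(q·Z)_{k,β} = −(1/2)·q_{k,α}·q_{j,β}, Σ_{Z∈B} (q·Z)_{j,n+α}·(q·Z)_{k,n+β} = −(1/2)·q_{k,n+α}·q_{j,n+β}, and Σ_{Z∈B} (q·Z)_{j,α}·(q·Z)_{k,n+β} = −(1/2)·q_{k,α}·q_{j,n+β}. Equivalently, the matrix coefficients z_{jα}, w_{jα} of the standard complex representation of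 Sp(n) satisfy τ(z_{jα}) = −((2n+1)/2)·z_{jα}, τ(w_{jα}) = −((2n+1)/2)·w_{jα}, κ(z_{jα},z_{kβ}) = −(1/2)·z_{kα}·z_{jβ}, κ(w_{jα},w_{kβ}) = −(1/2)·w_{kα}·w_{jβ}, and κ(z_{jα},w_{kβ}) = −(1/2)·z_{kα}·w_{jβ}. -/
open Matrix

/-- `2n × 2n` complex matrices, written in `n × n` blocks. -/
abbrev MSp (n : ℕ) := Matrix (Fin n ⊕ Fin n) (Fin n ⊕ Fin n) ℂ

/-- The quaternionic unitary group `Sp(n)`, realised as the intersection of `U(2n)`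
with the standard complex representation of `GL_n(ℍ)`. -/
def SpGroup (n : ℕ) : Set (MSp n) :=
  {q | q * q.conjTranspose = 1 ∧
    ∃ z w : Matrix (Fin n) (Fin n) ℂ,
      q = Matrix.fromBlocks z w (-(w.map (starRingEnd ℂ))) (z.map (starRingEnd ℂ))}

/-- Basis element `(1/√2)·[[Y_rs, 0], [0, Y_rs]]` of `sp(n)`. -/
noncomputable def B1 (n : ℕ) (r s : Fin n) : MSp n :=
  (Real.sqrt 2 : ℂ)⁻¹ • Matrix.fromBlocks (YY n r s) 0 0 (YY n r s)

/-- Basis element `(1/√2)·[[iX_rs, 0], [0, -iX_rs]]` of `sp(n)`. -/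
noncomputable def B2 (n : ℕ) (r s : Fin n) : MSp n :=
  (Real.sqrt 2 : ℂ)⁻¹ •
    Matrix.fromBlocks (Complex.I • XX n r s) 0 0 (-(Complex.I • XX n r s))

/-- Basis element `(1/√2)·[[0, X_rs], [-X_rs, 0]]` of `sp(n)`. -/
noncomputable def B3 (n : ℕ) (r s : Fin n) : MSp n :=
  (Real.sqrt 2 : ℂ)⁻¹ • Matrix.fromBlocks 0 (XX n r s) (-(XX n r s)) 0

/-- Basis element `(1/√2)·[[0, iX_rs], [iX_rs, 0]]` of `sp(n)`. -/
noncomputable def B4 (n : ℕ) (r s : Fin n) : MSp n :=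
  (Real.sqrt 2 : ℂ)⁻¹ •
    Matrix.fromBlocks 0 (Complex.I • XX n r s) (Complex.I • XX n r s) 0

/-- Basis element `(1/√2)·[[0, D_r], [-D_r, 0]]` of `sp(n)`. -/
noncomputable def C1 (n : ℕ) (r : Fin n) : MSp n :=
  (Real.sqrt 2 : ℂ)⁻¹ • Matrix.fromBlocks 0 (DD n r) (-(DD n r)) 0

/-- Basis element `(1/√2)·[[0, iD_r], [iD_r, 0]]` of `sp(n)`. -/
noncomputable def C2 (n : ℕ) (r : Fin n) : MSp n :=
  (Real.sqrt 2 : ℂ)⁻¹ •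
    Matrix.fromBlocks 0 (Complex.I • DD n r) (Complex.I • DD n r) 0

/-- Basis element `(1/√2)·[[iD_r, 0], [0, -iD_r]]` of `sp(n)`. -/
noncomputable def C3 (n : ℕ) (r : Fin n) : MSp n :=
  (Real.sqrt 2 : ℂ)⁻¹ •
    Matrix.fromBlocks (Complex.I • DD n r) 0 0 (-(Complex.I • DD n r))

/-- The Laplace–Beltrami operator `τ(F)(q) = Σ_{Z ∈ B} F(q·Z·Z)` of the bi-invariant
metric on `Sp(n)`, where `B` is the canonical orthonormal basis of `sp(n)`. -/
noncomputable def tauSp (n : ℕ) (F : MSp n → ℂ) (q : MSp n) : ℂ :=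
  (∑ r : Fin n, ∑ s : Fin n, if r < s then
      F (q * B1 n r s * B1 n r s) + F (q * B2 n r s * B2 n r s)
        + F (q * B3 n r s * B3 n r s) + F (q * B4 n r s * B4 n r s)
    else 0)
  + ∑ r : Fin n, (F (q * C1 n r * C1 n r) + F (q * C2 n r * C2 n r)
      + F (q * C3 n r * C3 n r))

/-- The conformality operator `κ(F,G)(q) = Σ_{Z ∈ B} F(q·Z)·G(q·Z)` on `Sp(n)`. -/
noncomputable def kappaSp (n : ℕ) (F G : MSp n → ℂ) (q : MSp n) : ℂ :=
  (∑ r : Fin n, ∑ s : Fin n, if r < s then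
      F (q * B1 n r s) * G (q * B1 n r s) + F (q * B2 n r s) * G (q * B2 n r s)
        + F (q * B3 n r s) * G (q * B3 n r s) + F (q * B4 n r s) * G (q * B4 n r s)
    else 0)
  + ∑ r : Fin n, (F (q * C1 n r) * G (q * C1 n r) + F (q * C2 n r) * G (q * C2 n r)
      + F (q * C3 n r) * G (q * C3 n r))

/-! Everything is computed from the explicit basis. For any `Φ` that is quadratic in `Z`, the sum
over `r < s` together with the diagonal `C`-terms is half of the full sum over all `r, s`, and each
`B_k(r, s)` is a scalar multiple of a block matrix built from `E_rs ± E_sr`. For `τ` this yields the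
Casimir identity `Σ_{Z∈B} Z² = -((2n+1)/2)·1`, so `τ` multiplies every entry of `q` by that scalar.
For `κ` the double sums collapse to `-(1/2) q_{kα} q_{jβ}` plus a multiple of `δ_{αβ}`, which
cancels in the pure cases and in the mixed case is `(q J qᵀ)_{jk} = 0` for `q ∈ Sp(n)`. -/

namespace Sp

variable {n : ℕ}

theorem sum_sum_eq_two_nsmul_sum_sum_ite_lt_add {ι M : Type*} [Fintype ι] [LinearOrder ι]
    [AddCommMonoid M] (f : ι → ι → M) (hf : ∀ r s, f s r = f r s) :
    ∑ r, ∑ s, f r s = 2 • (∑ r, ∑ s, if r < s then f r s else 0) + ∑ r, f r r := by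
  have hsplit : ∀ r s, f r s = (if r < s then f r s else 0) + (if s < r then f s r else 0)
      + (if r = s then f r s else 0) := by
    intro r s
    rcases lt_trichotomy r s with h | rfl | h
    · simp [h, h.not_gt, h.ne]
    · simp
    · simp [h, h.not_gt, h.ne', hf]
  calc ∑ r, ∑ s, f r s
      = ∑ r, ∑ s, ((if r < s then f r s else 0) + (if s < r then f s r else 0)
          + (if r = s then f r s else 0)) :=
        Finset.sum_congr rfl fun r _ => Finset.sum_congr rfl fun s _ => hsplit r s
    _ = 2 • (∑ r, ∑ s, if r < s then f r s else 0) + ∑ r, f r r := by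
        simp only [Finset.sum_add_distrib, Finset.sum_ite_eq, Finset.mem_univ, if_true]
        rw [Finset.sum_comm (f := fun r s => if s < r then f s r else 0), two_nsmul]

theorem sum_fromBlocks {ι l m o p α : Type*} [AddCommMonoid α] (s : Finset ι)
    (A : ι → Matrix o l α) (B : ι → Matrix o m α) (C : ι → Matrix p l α) (D : ι → Matrix p m α) :
    ∑ i ∈ s, fromBlocks (A i) (B i) (C i) (D i)
      = fromBlocks (∑ i ∈ s, A i) (∑ i ∈ s, B i) (∑ i ∈ s, C i) (∑ i ∈ s, D i) := by
  ext (i | i) (j | j) <;> simp [Matrix.sum_apply]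

noncomputable def basisSum {M : Type*} [AddCommMonoid M] (n : ℕ) (Φ : MSp n → M) : M :=
  (∑ r : Fin n, ∑ s : Fin n, if r < s then
      Φ (B1 n r s) + Φ (B2 n r s) + Φ (B3 n r s) + Φ (B4 n r s) else 0)
  + ∑ r : Fin n, (Φ (C1 n r) + Φ (C2 n r) + Φ (C3 n r))

theorem tauSp_eq_basisSum (F : MSp n → ℂ) (q : MSp n) :
    tauSp n F q = basisSum n (fun Z => F (q * Z * Z)) := rfl

theorem kappaSp_eq_basisSum (F G : MSp n → ℂ) (q : MSp n) :
    kappaSp n F G q = basisSum n (fun Z => F (q * Z) * G (q * Z)) := rfl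

theorem ofReal_sqrt_two_mul_self : ((Real.sqrt 2 : ℝ) : ℂ) * ((Real.sqrt 2 : ℝ) : ℂ) = 2 := by
  rw [← Complex.ofReal_mul, Real.mul_self_sqrt zero_le_two]; norm_num

theorem inv_ofReal_sqrt_two_mul_self :
    ((Real.sqrt 2 : ℝ) : ℂ)⁻¹ * ((Real.sqrt 2 : ℝ) : ℂ)⁻¹ = 2⁻¹ := by
  rw [← mul_inv, ofReal_sqrt_two_mul_self]

theorem XX_comm (r s : Fin n) : XX n s r = XX n r s := by
  rw [XX, XX, add_comm]

theorem YY_comm (r s : Fin n) : YY n s r = -YY n r s := by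
  rw [YY, YY, ← smul_neg, neg_sub]

theorem XX_self (r : Fin n) : XX n r r = ((Real.sqrt 2 : ℝ) : ℂ) • DD n r := by
  have h2 : ((Real.sqrt 2 : ℝ) : ℂ)⁻¹ * 2 = (Real.sqrt 2 : ℝ) := by
    rw [← ofReal_sqrt_two_mul_self, inv_mul_cancel_left₀ (by simp)]
  rw [XX, EE, ← two_smul ℂ, smul_smul, h2, DD]

theorem B1_comm (r s : Fin n) : B1 n s r = -B1 n r s := by
  rw [B1, B1, YY_comm, ← smul_neg, fromBlocks_neg, neg_zero]

theorem B2_comm (r s : Fin n) : B2 n s r = B2 n r s := by rw [B2, B2, XX_comm]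

theorem B3_comm (r s : Fin n) : B3 n s r = B3 n r s := by rw [B3, B3, XX_comm]

theorem B4_comm (r s : Fin n) : B4 n s r = B4 n r s := by rw [B4, B4, XX_comm]

theorem B1_self (r : Fin n) : B1 n r r = 0 := by
  simp [B1, YY]

theorem B2_self (r : Fin n) : B2 n r r = ((Real.sqrt 2 : ℝ) : ℂ) • C3 n r := by
  simp only [B2, C3, XX_self, fromBlocks_smul, smul_zero, smul_neg, fromBlocks_inj]
  refine ⟨?_, trivial, trivial, ?_⟩ <;> module

theorem B3_self (r : Fin n) : B3 n r r = ((Real.sqrt 2 : ℝ) : ℂ) • C1 n r := by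
  simp only [B3, C1, XX_self, fromBlocks_smul, smul_zero, smul_neg, fromBlocks_inj]
  refine ⟨trivial, ?_, ?_, trivial⟩ <;> module

theorem B4_self (r : Fin n) : B4 n r r = ((Real.sqrt 2 : ℝ) : ℂ) • C2 n r := by
  simp only [B4, C2, XX_self, fromBlocks_smul, smul_zero, fromBlocks_inj]
  refine ⟨trivial, ?_, ?_, trivial⟩ <;> module

/-- Each `B_k(r, r)` is `0` or `√2 • C_k'(r)`, so the `C`-terms are exactly half of the diagonal
of the full sum over `r, s`. -/
theorem basisSum_eq_half_sum {M : Type*} [AddCommGroup M] [Module ℂ M] (Φ : MSp n → M)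
    (hΦ : ∀ (c : ℂ) Z, Φ (c • Z) = c ^ 2 • Φ Z) :
    basisSum n Φ = (2 : ℂ)⁻¹ •
      ∑ r : Fin n, ∑ s : Fin n, (Φ (B1 n r s) + Φ (B2 n r s) + Φ (B3 n r s) + Φ (B4 n r s)) := by
  have hneg : ∀ Z, Φ (-Z) = Φ Z := fun Z => by simpa using hΦ (-1) Z
  have hzero : Φ 0 = 0 := by simpa using hΦ 0 0
  have hsqrt : ∀ Z, Φ (((Real.sqrt 2 : ℝ) : ℂ) • Z) = (2 : ℂ) • Φ Z := fun Z => by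
    rw [hΦ, sq, ofReal_sqrt_two_mul_self]
  rw [sum_sum_eq_two_nsmul_sum_sum_ite_lt_add _ fun r s => by
    rw [B1_comm, B2_comm, B3_comm, B4_comm, hneg]]
  simp only [B1_self, B2_self, B3_self, B4_self, hzero, hsqrt, zero_add, ← smul_add,
    ← Finset.smul_sum, basisSum]
  rw [← ofNat_smul_eq_nsmul ℂ, ← smul_add, smul_smul, inv_mul_cancel₀ two_ne_zero, one_smul]
  congr 1
  refine Finset.sum_congr rfl fun r _ => ?_
  abel

noncomputable def symE (n : ℕ) (ε : ℂ) (r s : Fin n) : Matrix (Fin n) (Fin n) ℂ :=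
  EE n r s + ε • EE n s r

theorem XX_eq (r s : Fin n) : XX n r s = ((Real.sqrt 2 : ℝ) : ℂ)⁻¹ • symE n 1 r s := by
  rw [XX, symE, one_smul]

theorem YY_eq (r s : Fin n) : YY n r s = ((Real.sqrt 2 : ℝ) : ℂ)⁻¹ • symE n (-1) r s := by
  rw [YY, symE, neg_one_smul, sub_eq_add_neg]

theorem B1_eq (r s : Fin n) :
    B1 n r s = (2⁻¹ : ℂ) • fromBlocks (symE n (-1) r s) 0 0 (symE n (-1) r s) := by
  simp only [B1, YY_eq, fromBlocks_smul, smul_zero, smul_smul, inv_ofReal_sqrt_two_mul_self]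

theorem B2_eq (r s : Fin n) :
    B2 n r s = (2⁻¹ * Complex.I) • fromBlocks (symE n 1 r s) 0 0 (-symE n 1 r s) := by
  simp only [B2, XX_eq, fromBlocks_smul, smul_zero, smul_neg, smul_smul, ← mul_assoc,
    mul_comm Complex.I, inv_ofReal_sqrt_two_mul_self]

theorem B3_eq (r s : Fin n) :
    B3 n r s = (2⁻¹ : ℂ) • fromBlocks 0 (symE n 1 r s) (-symE n 1 r s) 0 := by
  simp only [B3, XX_eq, fromBlocks_smul, smul_zero, smul_neg, smul_smul,
    inv_ofReal_sqrt_two_mul_self]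

theorem B4_eq (r s : Fin n) :
    B4 n r s = (2⁻¹ * Complex.I) • fromBlocks 0 (symE n 1 r s) (symE n 1 r s) 0 := by
  simp only [B4, XX_eq, fromBlocks_smul, smul_zero, smul_smul, ← mul_assoc,
    mul_comm Complex.I, inv_ofReal_sqrt_two_mul_self]

theorem EE_mul_EE (r s t u : Fin n) :
    EE n r s * EE n t u = if s = t then EE n r u else 0 := by
  split_ifs with h
  · rw [h, EE, EE, EE, single_mul_single_same, one_mul]
  · exact single_mul_single_of_ne (n := Fin n) _ _ _ _ h _

theorem sum_EE_self : ∑ r : Fin n, EE n r r = 1 := sum_single_one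

theorem sum_sum_symE_mul_self (ε : ℂ) :
    ∑ r : Fin n, ∑ s : Fin n, symE n ε r s * symE n ε r s = (1 + ε ^ 2 + 2 * ε * n) • 1 := by
  simp only [symE, add_mul, mul_add, mul_smul_comm, smul_mul_assoc, EE_mul_EE,
    if_true, Finset.sum_add_distrib, smul_ite, smul_zero, Finset.sum_ite_eq, Finset.sum_ite_eq',
    Finset.mem_univ, ← Finset.smul_sum, Finset.sum_const, Finset.card_univ, Fintype.card_fin,
    sum_EE_self]
  module

theorem half_I_mul_half_I : (2⁻¹ * Complex.I * (2⁻¹ * Complex.I) : ℂ) = -4⁻¹ := by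
  linear_combination 4⁻¹ * Complex.I_mul_I

theorem sum_B_mul_self (r s : Fin n) :
    B1 n r s * B1 n r s + B2 n r s * B2 n r s + B3 n r s * B3 n r s + B4 n r s * B4 n r s
      = fromBlocks
          ((4⁻¹ : ℂ) • (symE n (-1) r s * symE n (-1) r s - (3 : ℂ) • (symE n 1 r s * symE n 1 r s)))
          0 0
          ((4⁻¹ : ℂ) • (symE n (-1) r s * symE n (-1) r s - (3 : ℂ) • (symE n 1 r s * symE n 1 r s)))
          := by
  simp only [B1_eq, B2_eq, B3_eq, B4_eq, smul_mul_smul_comm, fromBlocks_multiply, fromBlocks_smul,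
    fromBlocks_add, half_I_mul_half_I, mul_zero, zero_mul, mul_neg, neg_mul, neg_neg, smul_zero,
    add_zero, zero_add, fromBlocks_inj]
  refine ⟨?_, trivial, trivial, ?_⟩ <;> module

theorem basisSum_mul_self :
    basisSum n (fun Z => Z * Z) = -((2 * n + 1) / 2 : ℂ) • (1 : MSp n) := by
  rw [basisSum_eq_half_sum _ fun c Z => by rw [smul_mul_smul_comm, sq]]
  simp only [sum_B_mul_self, sum_fromBlocks, ← Finset.smul_sum, Finset.sum_sub_distrib,
    sum_sum_symE_mul_self, Finset.sum_const_zero]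
  rw [← fromBlocks_one, fromBlocks_smul, fromBlocks_smul, fromBlocks_inj]
  refine ⟨?_, by simp, by simp, ?_⟩ <;> module

theorem tauSp_entry (q : MSp n) (i c : Fin n ⊕ Fin n) :
    tauSp n (fun M => M i c) q = -((2 * n + 1) / 2) * q i c := by
  have h : tauSp n (fun M => M i c) q = (q * basisSum n (fun Z => Z * Z)) i c := by
    simp [tauSp_eq_basisSum, basisSum, Matrix.mul_add, Matrix.mul_sum, mul_ite, mul_assoc,
      Matrix.sum_apply, apply_ite (fun M : MSp n => M i c)]
  rw [h, basisSum_mul_self, Matrix.mul_smul, Matrix.mul_one, Matrix.smul_apply,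
    smul_eq_mul]

theorem vecMul_symE_apply (x : Fin n → ℂ) (ε : ℂ) (r s α : Fin n) :
    (x ᵥ* symE n ε r s) α = (if s = α then x r else 0) + ε * (if r = α then x s else 0) := by
  simp [symE, EE, vecMul, dotProduct, single_apply, ite_and, mul_add, Finset.sum_add_distrib,
    mul_comm ε]

theorem sum_sum_mul_vecMul_symE_mul (c d : ℂ) (x y : Fin n → ℂ) (ε δ : ℂ) (α β : Fin n) :
    ∑ r, ∑ s, c * (x ᵥ* symE n ε r s) α * (d * (y ᵥ* symE n δ r s) β)
      = c * d * ((1 + ε * δ) * (if α = β then x ⬝ᵥ y else 0) + (ε + δ) * (x β * y α)) := by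
  simp only [mul_mul_mul_comm c _ d _, ← Finset.mul_sum]
  congr 1
  simp only [vecMul_symE_apply, add_mul, mul_add, mul_ite, ite_mul, mul_zero, zero_mul,
    Finset.sum_add_distrib, Finset.sum_ite_eq', Finset.mem_univ, if_true,
    Finset.sum_ite_irrel, Finset.sum_const_zero]
  rcases eq_or_ne α β with rfl | h
  · have hsum : ∑ i, ε * x i * (δ * y i) = ε * δ * (x ⬝ᵥ y) := by
      rw [dotProduct, Finset.mul_sum]
      exact Finset.sum_congr rfl fun _ _ => by ring
    simp only [if_true, hsum, dotProduct]
    ring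
  · simp only [h, h.symm, if_false]
    ring

theorem mul_smul_fromBlocks_apply_inl (q : MSp n) (c : ℂ) (A B C D : Matrix (Fin n) (Fin n) ℂ)
    (i : Fin n ⊕ Fin n) (α : Fin n) :
    (q * (c • fromBlocks A B C D)) i (Sum.inl α)
      = c * (((q i ∘ Sum.inl) ᵥ* A) α + ((q i ∘ Sum.inr) ᵥ* C) α) := by
  rw [Matrix.mul_smul, Matrix.smul_apply, smul_eq_mul, mul_apply_eq_vecMul, vecMul_fromBlocks]
  rfl

theorem mul_smul_fromBlocks_apply_inr (q : MSp n) (c : ℂ) (A B C D : Matrix (Fin n) (Fin n) ℂ)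
    (i : Fin n ⊕ Fin n) (α : Fin n) :
    (q * (c • fromBlocks A B C D)) i (Sum.inr α)
      = c * (((q i ∘ Sum.inl) ᵥ* B) α + ((q i ∘ Sum.inr) ᵥ* D) α) := by
  rw [Matrix.mul_smul, Matrix.smul_apply, smul_eq_mul, mul_apply_eq_vecMul, vecMul_fromBlocks]
  rfl

theorem kappaSp_entry (q : MSp n) (i k a b : Fin n ⊕ Fin n) :
    kappaSp n (fun M => M i a) (fun M => M k b) q = 2⁻¹ * ∑ r : Fin n, ∑ s : Fin n,
      ((q * B1 n r s) i a * (q * B1 n r s) k b + (q * B2 n r s) i a * (q * B2 n r s) k b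
        + (q * B3 n r s) i a * (q * B3 n r s) k b + (q * B4 n r s) i a * (q * B4 n r s) k b) := by
  rw [kappaSp_eq_basisSum, basisSum_eq_half_sum, smul_eq_mul]
  intro c Z
  simp only [Matrix.mul_smul, Matrix.smul_apply, smul_eq_mul]
  ring

theorem kappaSp_entry_inl_inl (q : MSp n) (i k : Fin n ⊕ Fin n) (α β : Fin n) :
    kappaSp n (fun M => M i (Sum.inl α)) (fun M => M k (Sum.inl β)) q
      = -(1 / 2 : ℂ) * (q k (Sum.inl α) * q i (Sum.inl β)) := by
  rw [kappaSp_entry]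
  simp only [B1_eq, B2_eq, B3_eq, B4_eq, mul_smul_fromBlocks_apply_inl, vecMul_zero, Pi.zero_apply,
    add_zero, zero_add, vecMul_neg, Pi.neg_apply, mul_neg, neg_mul, neg_neg, Finset.sum_add_distrib,
    sum_sum_mul_vecMul_symE_mul, half_I_mul_half_I, Function.comp_apply]
  ring

theorem kappaSp_entry_inr_inr (q : MSp n) (i k : Fin n ⊕ Fin n) (α β : Fin n) :
    kappaSp n (fun M => M i (Sum.inr α)) (fun M => M k (Sum.inr β)) q
      = -(1 / 2 : ℂ) * (q k (Sum.inr α) * q i (Sum.inr β)) := by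
  rw [kappaSp_entry]
  simp only [B1_eq, B2_eq, B3_eq, B4_eq, mul_smul_fromBlocks_apply_inr, vecMul_zero, Pi.zero_apply,
    add_zero, zero_add, vecMul_neg, Pi.neg_apply, mul_neg, neg_mul, neg_neg, Finset.sum_add_distrib,
    sum_sum_mul_vecMul_symE_mul, half_I_mul_half_I, Function.comp_apply]
  ring

theorem kappaSp_entry_inl_inr (q : MSp n) (i k : Fin n ⊕ Fin n) (α β : Fin n)
    (hik : (q i ∘ Sum.inl) ⬝ᵥ (q k ∘ Sum.inr) = (q i ∘ Sum.inr) ⬝ᵥ (q k ∘ Sum.inl)) :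
    kappaSp n (fun M => M i (Sum.inl α)) (fun M => M k (Sum.inr β)) q
      = -(1 / 2 : ℂ) * (q k (Sum.inl α) * q i (Sum.inr β)) := by
  rw [kappaSp_entry]
  simp only [B1_eq, B2_eq, B3_eq, B4_eq, mul_smul_fromBlocks_apply_inl,
    mul_smul_fromBlocks_apply_inr, vecMul_zero, Pi.zero_apply, add_zero, zero_add, vecMul_neg,
    Pi.neg_apply, mul_neg, neg_mul, neg_neg, Finset.sum_add_distrib, Finset.sum_neg_distrib,
    sum_sum_mul_vecMul_symE_mul, half_I_mul_half_I, hik]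
  simp only [Function.comp_apply]
  ring

/-- The `(j, n + k)` entry of `q q* = 1`: the upper rows of `q ∈ Sp(n)` are isotropic for the
symplectic form, `(q J qᵀ)_{jk} = 0`. -/
theorem dotProduct_inl_inr_eq_of_mem_SpGroup {q : MSp n} (hq : q ∈ SpGroup n) (j k : Fin n) :
    (q (Sum.inl j) ∘ Sum.inl) ⬝ᵥ (q (Sum.inl k) ∘ Sum.inr)
      = (q (Sum.inl j) ∘ Sum.inr) ⬝ᵥ (q (Sum.inl k) ∘ Sum.inl) := by
  obtain ⟨hu, z, w, rfl⟩ := hq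
  have h0 := congrFun (congrFun hu (Sum.inl j)) (Sum.inr k)
  rw [Matrix.mul_apply, Fintype.sum_sum_type, one_apply_ne Sum.inl_ne_inr] at h0
  simp only [conjTranspose_apply, fromBlocks_apply₁₁, fromBlocks_apply₁₂, fromBlocks_apply₂₁,
    fromBlocks_apply₂₂, Matrix.neg_apply, map_apply, star_neg, Complex.star_def, Complex.conj_conj,
    mul_neg, Finset.sum_neg_distrib] at h0
  simp only [dotProduct, Function.comp_apply, fromBlocks_apply₁₁, fromBlocks_apply₁₂]
  linear_combination -h0

end Sp

open Sp in
theorem stmt_13_general (n : ℕ) (q : MSp n) (hq : q ∈ SpGroup n) :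
    (∀ (j : Fin n) (c : Fin n ⊕ Fin n),
      tauSp n (fun M => M (Sum.inl j) c) q
        = -((2 * (n : ℂ) + 1) / 2) * q (Sum.inl j) c) ∧
    (∀ j k α β : Fin n,
      kappaSp n (fun M => M (Sum.inl j) (Sum.inl α))
          (fun M => M (Sum.inl k) (Sum.inl β)) q
        = -(1 / 2 : ℂ) * (q (Sum.inl k) (Sum.inl α) * q (Sum.inl j) (Sum.inl β)) ∧
      kappaSp n (fun M => M (Sum.inl j) (Sum.inr α))
          (fun M => M (Sum.inl k) (Sum.inr β)) q
        = -(1 / 2 : ℂ) * (q (Sum.inl k) (Sum.inr α) * q (Sum.inl j) (Sum.inr β)) ∧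
      kappaSp n (fun M => M (Sum.inl j) (Sum.inl α))
          (fun M => M (Sum.inl k) (Sum.inr β)) q
        = -(1 / 2 : ℂ) * (q (Sum.inl k) (Sum.inl α) * q (Sum.inl j) (Sum.inr β))) :=
  ⟨fun j c => tauSp_entry q (Sum.inl j) c, fun j k α β =>
    ⟨kappaSp_entry_inl_inl q _ _ α β, kappaSp_entry_inr_inr q _ _ α β,
      kappaSp_entry_inl_inr q _ _ α β (dotProduct_inl_inr_eq_of_mem_SpGroup hq j k)⟩⟩

/-- Lemma 8.1: the matrix coefficients `z_{jα} = q_{j,α}` and `w_{jα} = q_{j,n+α}` of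
the standard complex representation of `Sp(n)` satisfy
`τ(z_{jα}) = -((2n+1)/2)·z_{jα}`, `τ(w_{jα}) = -((2n+1)/2)·w_{jα}`,
`κ(z_{jα}, z_{kβ}) = -(1/2)·z_{kα}·z_{jβ}`, `κ(w_{jα}, w_{kβ}) = -(1/2)·w_{kα}·w_{jβ}`
and `κ(z_{jα}, w_{kβ}) = -(1/2)·z_{kα}·w_{jβ}`. -/
theorem stmt_13 (n : ℕ) (hn : 0 < n) (q : MSp n) (hq : q ∈ SpGroup n) :
    (∀ (j : Fin n) (c : Fin n ⊕ Fin n),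
      tauSp n (fun M => M (Sum.inl j) c) q
        = -((2 * (n : ℂ) + 1) / 2) * q (Sum.inl j) c) ∧
    (∀ j k α β : Fin n,
      kappaSp n (fun M => M (Sum.inl j) (Sum.inl α))
          (fun M => M (Sum.inl k) (Sum.inl β)) q
        = -(1 / 2 : ℂ) * (q (Sum.inl k) (Sum.inl α) * q (Sum.inl j) (Sum.inl β)) ∧
      kappaSp n (fun M => M (Sum.inl j) (Sum.inr α))
          (fun M => M (Sum.inl k) (Sum.inr β)) q
        = -(1 / 2 : ℂ) * (q (Sum.inl k) (Sum.inr α) * q (Sum.inl j) (Sum.inr β)) ∧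
      kappaSp n (fun M => M (Sum.inl j) (Sum.inl α))
          (fun M => M (Sum.inl k) (Sum.inr β)) q
        = -(1 / 2 : ℂ) * (q (Sum.inl k) (Sum.inl α) * q (Sum.inl j) (Sum.inr β))) :=
  stmt_13_general n q hq
end

section
/- Let a, b, p, q ∈ ℂⁿ and define the functions P, Q, R, S on Sp(n) by P = Σ_{j,α} p_j·a_α·z_{jα}, Q = Σ_{k,β} q_k·b_β·z_{kβ}, R = Σ_{j,β} p_j·b_β·z_{jβ}, S = Σ_{k,α} q_k·a_α·z_{kα} (where z_{jα} = q'_{j,α} for q' ∈ Sp(n)). Then the following identities of functions on Sp(n) hold: κ(P,P) = −(1/2)·P², κ(Q,Q) = −(1/2)·Q², κ(R,R) = −(1/2)·R², κ(S,S) = −(1/2)·S², κ(P,Q) = −(1/2)·R·S, κ(R,S) = −(1/2)·P·Q, κ(P,R) = −(1/2)·P·R, κ(P,S) = −(1/2)·P·S, κ(Q,R) = −(1/2)·Q·R, κ(Q,S) = −(1/2)·Q·S; that is, the conditions (PP-QQ) of the paper's general scheme hold on Sp(n) with μ = −1/2. -/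
open Matrix

/-
κ is left-invariant, κ(F, G)(M) = κ(F ∘ (M * ·), G ∘ (M * ·))(1), and each of P, Q, R, S has the
form F_{c,e}(N) = cᵀ z e, so that F_{c,e}(M Z) = U · (Z ê) with U = ĉᵀ M, ĉ = (c, 0), ê = (e, 0). Everything
thus reduces to the contraction identity Σ_{Z ∈ B} (U · Z ê)(V · Z f̂) = -½ (U · f̂)(V · ê),
a direct computation with the basis of sp(n): writing U = (cᵀz, cᵀw), the cᵀw components cancel
(B3 against B4, C1 against C2), while the cᵀz components produce the swap of e and f.
-/

lemma inv_sqrt_two_mul_self : (Real.sqrt 2 : ℂ)⁻¹ * (Real.sqrt 2 : ℂ)⁻¹ = 2⁻¹ := by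
  rw [← mul_inv, ← Complex.ofReal_mul, Real.mul_self_sqrt zero_le_two]; norm_num

section BasisAction

variable {n : ℕ} (u w e : Fin n → ℂ) (r s : Fin n)

lemma dotProduct_B1_mulVec :
    Sum.elim u w ⬝ᵥ (B1 n r s *ᵥ Sum.elim e 0) = 2⁻¹ * (u r * e s - u s * e r) := by
  simp [B1, YY, EE, fromBlocks_mulVec, smul_mulVec, sub_mulVec, single_mulVec,
    sumElim_dotProduct_sumElim, dotProduct_sub, ← Pi.single.eq_def]
  rw [← inv_sqrt_two_mul_self]
  ring

lemma dotProduct_B2_mulVec :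
    Sum.elim u w ⬝ᵥ (B2 n r s *ᵥ Sum.elim e 0) = Complex.I * 2⁻¹ * (u r * e s + u s * e r) := by
  simp [B2, XX, EE, fromBlocks_mulVec, smul_mulVec, add_mulVec, single_mulVec,
    sumElim_dotProduct_sumElim, dotProduct_add, ← Pi.single.eq_def]
  rw [← inv_sqrt_two_mul_self]
  ring

lemma dotProduct_B3_mulVec :
    Sum.elim u w ⬝ᵥ (B3 n r s *ᵥ Sum.elim e 0) = -2⁻¹ * (w r * e s + w s * e r) := by
  simp [B3, XX, EE, fromBlocks_mulVec, smul_mulVec, neg_mulVec, add_mulVec, single_mulVec,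
    sumElim_dotProduct_sumElim, dotProduct_add, ← Pi.single.eq_def]
  rw [← inv_sqrt_two_mul_self]
  ring

lemma dotProduct_B4_mulVec :
    Sum.elim u w ⬝ᵥ (B4 n r s *ᵥ Sum.elim e 0) = Complex.I * 2⁻¹ * (w r * e s + w s * e r) := by
  simp [B4, XX, EE, fromBlocks_mulVec, smul_mulVec, add_mulVec, single_mulVec,
    sumElim_dotProduct_sumElim, dotProduct_add, ← Pi.single.eq_def]
  rw [← inv_sqrt_two_mul_self]
  ring

lemma dotProduct_C1_mulVec :
    Sum.elim u w ⬝ᵥ (C1 n r *ᵥ Sum.elim e 0) = -(Real.sqrt 2 : ℂ)⁻¹ * (w r * e r) := by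
  simp [C1, DD, fromBlocks_mulVec, smul_mulVec, neg_mulVec, single_mulVec,
    sumElim_dotProduct_sumElim, ← Pi.single.eq_def]

lemma dotProduct_C2_mulVec :
    Sum.elim u w ⬝ᵥ (C2 n r *ᵥ Sum.elim e 0) = Complex.I * (Real.sqrt 2 : ℂ)⁻¹ * (w r * e r) := by
  simp [C2, DD, fromBlocks_mulVec, smul_mulVec, single_mulVec, ← Pi.single.eq_def]
  ring

lemma dotProduct_C3_mulVec :
    Sum.elim u w ⬝ᵥ (C3 n r *ᵥ Sum.elim e 0) = Complex.I * (Real.sqrt 2 : ℂ)⁻¹ * (u r * e r) := by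
  simp [C3, DD, fromBlocks_mulVec, smul_mulVec, single_mulVec, ← Pi.single.eq_def]
  ring

end BasisAction

theorem sum_ite_lt_add_swap_add_sum_diag {ι M : Type*} [Fintype ι] [LinearOrder ι]
    [AddCommMonoid M] (h : ι → ι → M) :
    (∑ r, ∑ s, if r < s then h r s + h s r else 0) + ∑ r, h r r = ∑ r, ∑ s, h r s := by
  have hswap : (∑ r, ∑ s, if r < s then h s r else 0) = ∑ r, ∑ s, if s < r then h r s else 0 :=
    Finset.sum_comm
  have hdiag : ∑ r, h r r = ∑ r, ∑ s, if r = s then h r s else 0 := by simp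
  simp_rw [ite_add_zero (P := _ < _), Finset.sum_add_distrib, hswap, hdiag,
    ← Finset.sum_add_distrib]
  refine Finset.sum_congr rfl fun r _ => Finset.sum_congr rfl fun s _ => ?_
  rcases lt_trichotomy r s with hrs | rfl | hrs
  · simp [hrs, hrs.not_gt, hrs.ne]
  · simp
  · simp [hrs, hrs.not_gt, hrs.ne']

section

variable {n : ℕ}

lemma kappaSp_eq_kappaSp_one (F G : MSp n → ℂ) (M : MSp n) :
    kappaSp n F G M = kappaSp n (fun Z => F (M * Z)) (fun Z => G (M * Z)) 1 := by
  simp only [kappaSp, one_mul]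

theorem kappaSp_one_dotProduct_mulVec (U V : Fin n ⊕ Fin n → ℂ) (e f : Fin n → ℂ) :
    kappaSp n (fun Z => U ⬝ᵥ (Z *ᵥ Sum.elim e 0)) (fun Z => V ⬝ᵥ (Z *ᵥ Sum.elim f 0)) 1 =
      -(1 / 2) * ((U ⬝ᵥ Sum.elim f 0) * (V ⬝ᵥ Sum.elim e 0)) := by
  obtain ⟨u, w, rfl⟩ : ∃ u w, U = Sum.elim u w := ⟨_, _, (Sum.elim_comp_inl_inr U).symm⟩
  obtain ⟨v, x, rfl⟩ : ∃ v x, V = Sum.elim v x := ⟨_, _, (Sum.elim_comp_inl_inr V).symm⟩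
  set g : Fin n → Fin n → ℂ := fun r s => -(1 / 2) * ((u r * f r) * (v s * e s))
  have hI : Complex.I * Complex.I = -1 := Complex.I_mul_I
  calc kappaSp n _ _ 1
      = (∑ r, ∑ s, if r < s then g r s + g s r else 0) + ∑ r, g r r := by
        simp only [kappaSp, one_mul, dotProduct_B1_mulVec, dotProduct_B2_mulVec,
          dotProduct_B3_mulVec, dotProduct_B4_mulVec, dotProduct_C1_mulVec, dotProduct_C2_mulVec,
          dotProduct_C3_mulVec]
        congr 1
        · refine Finset.sum_congr rfl fun r _ => Finset.sum_congr rfl fun s _ => ?_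
          split_ifs
          -- the `w`, `x` terms cancel because `(-1/2)² + (i/2)² = 0`
          · linear_combination (4⁻¹ * (u r * e s + u s * e r) * (v r * f s + v s * f r)
              + 4⁻¹ * (w r * e s + w s * e r) * (x r * f s + x s * f r)) * hI
          · rfl
        · refine Finset.sum_congr rfl fun r _ => ?_
          linear_combination ((Real.sqrt 2 : ℂ)⁻¹ * (Real.sqrt 2 : ℂ)⁻¹
            * (w r * e r * (x r * f r) + u r * e r * (v r * f r))) * hI
            - u r * e r * (v r * f r) * inv_sqrt_two_mul_self
    _ = ∑ r, ∑ s, g r s := sum_ite_lt_add_swap_add_sum_diag g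
    _ = -(1 / 2) * ((Sum.elim u w ⬝ᵥ Sum.elim f 0) * (Sum.elim v x ⬝ᵥ Sum.elim e 0)) := by
        rw [sumElim_dotProduct_sumElim, sumElim_dotProduct_sumElim, dotProduct_zero,
          dotProduct_zero, add_zero, add_zero, dotProduct, dotProduct, Finset.sum_mul_sum]
        simp only [Finset.mul_sum]
        refine Finset.sum_congr rfl fun r _ => Finset.sum_congr rfl fun s _ => ?_
        ring

def topLeftForm (c e : Fin n → ℂ) (N : MSp n) : ℂ :=
  ∑ j, ∑ α, c j * e α * N (Sum.inl j) (Sum.inl α)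

lemma topLeftForm_eq_dotProduct (c e : Fin n → ℂ) (N : MSp n) :
    topLeftForm c e N = (Sum.elim c 0 ᵥ* N) ⬝ᵥ Sum.elim e 0 := by
  simp only [topLeftForm, vecMul, dotProduct, Fintype.sum_sum_type, Sum.elim_inl, Sum.elim_inr,
    Pi.zero_apply, zero_mul, mul_zero, Finset.sum_const_zero, add_zero, Finset.sum_mul]
  rw [Finset.sum_comm]
  exact Finset.sum_congr rfl fun j _ => Finset.sum_congr rfl fun α _ => by ring

lemma topLeftForm_mul (c e : Fin n → ℂ) (M Z : MSp n) :
    topLeftForm c e (M * Z) = (Sum.elim c 0 ᵥ* M) ⬝ᵥ (Z *ᵥ Sum.elim e 0) := by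
  rw [topLeftForm_eq_dotProduct, ← vecMul_vecMul, dotProduct_mulVec]

theorem kappaSp_topLeftForm (c e d f : Fin n → ℂ) (M : MSp n) :
    kappaSp n (topLeftForm c e) (topLeftForm d f) M =
      -(1 / 2) * (topLeftForm c f M * topLeftForm d e M) := by
  rw [kappaSp_eq_kappaSp_one]
  simp only [topLeftForm_mul]
  rw [kappaSp_one_dotProduct_mulVec, topLeftForm_eq_dotProduct, topLeftForm_eq_dotProduct]

end

theorem stmt_14_general (n : ℕ) (a b p q : Fin n → ℂ)
    (P Q R S : MSp n → ℂ)
    (hPdef : P = fun M => ∑ j : Fin n, ∑ α : Fin n, p j * a α * M (Sum.inl j) (Sum.inl α))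
    (hQdef : Q = fun M => ∑ k : Fin n, ∑ β : Fin n, q k * b β * M (Sum.inl k) (Sum.inl β))
    (hRdef : R = fun M => ∑ j : Fin n, ∑ β : Fin n, p j * b β * M (Sum.inl j) (Sum.inl β))
    (hSdef : S = fun M => ∑ k : Fin n, ∑ α : Fin n, q k * a α * M (Sum.inl k) (Sum.inl α)) :
    ∀ M ∈ SpGroup n,
      kappaSp n P P M = -(1 / 2 : ℂ) * (P M) ^ 2 ∧
      kappaSp n Q Q M = -(1 / 2 : ℂ) * (Q M) ^ 2 ∧
      kappaSp n R R M = -(1 / 2 : ℂ) * (R M) ^ 2 ∧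
      kappaSp n S S M = -(1 / 2 : ℂ) * (S M) ^ 2 ∧
      kappaSp n P Q M = -(1 / 2 : ℂ) * (R M * S M) ∧
      kappaSp n R S M = -(1 / 2 : ℂ) * (P M * Q M) ∧
      kappaSp n P R M = -(1 / 2 : ℂ) * (P M * R M) ∧
      kappaSp n P S M = -(1 / 2 : ℂ) * (P M * S M) ∧
      kappaSp n Q R M = -(1 / 2 : ℂ) * (Q M * R M) ∧
      kappaSp n Q S M = -(1 / 2 : ℂ) * (Q M * S M) := by
  obtain rfl : P = topLeftForm p a := hPdef
  obtain rfl : Q = topLeftForm q b := hQdef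
  obtain rfl : R = topLeftForm p b := hRdef
  obtain rfl : S = topLeftForm q a := hSdef
  intro M _
  refine ⟨?_, ?_, ?_, ?_, ?_, ?_, ?_, ?_, ?_, ?_⟩ <;> rw [kappaSp_topLeftForm] <;> ring

/-- Lemma 8.4 (first choice): the functions `P = Σ p_j a_α z_{jα}`,
`Q = Σ q_k b_β z_{kβ}`, `R = Σ p_j b_β z_{jβ}`, `S = Σ q_k a_α z_{kα}` on `Sp(n)`
satisfy the conditions (PP-QQ) with `μ = -1/2`. -/
theorem stmt_14 (n : ℕ) (hn : 0 < n) (a b p q : Fin n → ℂ)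
    (P Q R S : MSp n → ℂ)
    (hPdef : P = fun M => ∑ j : Fin n, ∑ α : Fin n, p j * a α * M (Sum.inl j) (Sum.inl α))
    (hQdef : Q = fun M => ∑ k : Fin n, ∑ β : Fin n, q k * b β * M (Sum.inl k) (Sum.inl β))
    (hRdef : R = fun M => ∑ j : Fin n, ∑ β : Fin n, p j * b β * M (Sum.inl j) (Sum.inl β))
    (hSdef : S = fun M => ∑ k : Fin n, ∑ α : Fin n, q k * a α * M (Sum.inl k) (Sum.inl α)) :
    ∀ M ∈ SpGroup n,
      kappaSp n P P M = -(1 / 2 : ℂ) * (P M) ^ 2 ∧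
      kappaSp n Q Q M = -(1 / 2 : ℂ) * (Q M) ^ 2 ∧
      kappaSp n R R M = -(1 / 2 : ℂ) * (R M) ^ 2 ∧
      kappaSp n S S M = -(1 / 2 : ℂ) * (S M) ^ 2 ∧
      kappaSp n P Q M = -(1 / 2 : ℂ) * (R M * S M) ∧
      kappaSp n R S M = -(1 / 2 : ℂ) * (P M * Q M) ∧
      kappaSp n P R M = -(1 / 2 : ℂ) * (P M * R M) ∧
      kappaSp n P S M = -(1 / 2 : ℂ) * (P M * S M) ∧
      kappaSp n Q R M = -(1 / 2 : ℂ) * (Q M * R M) ∧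
      kappaSp n Q S M = -(1 / 2 : ℂ) * (Q M * S M) :=
  stmt_14_general n a b p q P Q R S hPdef hQdef hRdef hSdef
end
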